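/- arXiv:1907.11151 — 7 statements merged into one kernel-verified Lean document; each statement's English description precedes it below -/
import Mathlib

section
/- For all integers p, q ≥ 1 and all Z, W ∈ M_{p×q}(ℂ) such that I_p − Z Zᴴ and I_p − W Wᴴ are positive definite, one has det(I_p − Z Zᴴ) · det(I_p − W Wᴴ) ≤ |det(I_p − Z Wᴴ)|², with equality if and only if Z = W. (Equivalently, the invariant function ψ(Z,W) = |det(I_p − Z Wᴴ)|² / (det(I_p − Z Zᴴ) det(I_p − W Wᴴ)) satisfies ψ ≥ 1, and ψ(Z,W) > 1 whenever Z ≠ W.) -/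
/-!
Write `B = (I - W Wᴴ)⁻¹` and `C = (I - Wᴴ W)⁻¹`. The push-through identity `Wᴴ B = C Wᴴ` gives
`(I - Z Wᴴ) B (I - W Zᴴ) = (I - Z Zᴴ) + (Z - W) C (Z - W)ᴴ`, and taking determinants,
`|det(I - Z Wᴴ)|² = det(I - W Wᴴ) · det(I - Z Zᴴ + P)` with `P = (Z - W) C (Z - W)ᴴ`.
Since `C` is positive definite, `P` is positive semidefinite and vanishes only when `Z = W`.
Adding a nonzero positive semidefinite matrix to a positive definite `A` strictly increases its
determinant: writing `P = Xᴴ X`, `det(A + P) = det A · det(I + X A⁻¹ Xᴴ)`, and the last factor is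
a product `∏ (1 + μᵢ)` over the nonnegative, not all zero, eigenvalues of `X A⁻¹ Xᴴ`.
-/

open Matrix
open scoped ComplexConjugate ComplexOrder

noncomputable section

def typeIDomain (p q : ℕ) : Set (Matrix (Fin p) (Fin q) ℂ) :=
  {Z | (1 - Z * Zᴴ).PosDef}

namespace Matrix

section PushThrough

variable {α m n : Type*} [CommRing α] [Fintype m] [Fintype n] [DecidableEq m] [DecidableEq n]

lemma one_sub_mul_mul_comm (V : Matrix n m α) (W : Matrix m n α) :
    (1 - V * W) * V = V * (1 - W * V) := by
  simp only [Matrix.sub_mul, Matrix.mul_sub, Matrix.one_mul, Matrix.mul_one, Matrix.mul_assoc]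

lemma mul_inv_one_sub_mul_comm (V : Matrix n m α) (W : Matrix m n α) :
    V * (1 - W * V)⁻¹ = (1 - V * W)⁻¹ * V := by
  have hdet := det_one_sub_mul_comm W V
  by_cases h : IsUnit (1 - W * V).det
  · have h' : IsUnit (1 - V * W).det := hdet ▸ h
    calc V * (1 - W * V)⁻¹ = (1 - V * W)⁻¹ * ((1 - V * W) * V) * (1 - W * V)⁻¹ := by
          rw [← Matrix.mul_assoc, nonsing_inv_mul _ h', Matrix.one_mul]
      _ = (1 - V * W)⁻¹ * V := by
          rw [one_sub_mul_mul_comm, Matrix.mul_assoc, Matrix.mul_assoc,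
            mul_nonsing_inv _ h, Matrix.mul_one]
  · have h' : ¬IsUnit (1 - V * W).det := hdet ▸ h
    rw [nonsing_inv_apply_not_isUnit _ h, nonsing_inv_apply_not_isUnit _ h', Matrix.mul_zero,
      Matrix.zero_mul]

lemma inv_one_sub_mul (V : Matrix n m α) (W : Matrix m n α) (h : IsUnit (1 - W * V).det) :
    (1 - V * W)⁻¹ = 1 + V * (1 - W * V)⁻¹ * W := by
  refine inv_eq_right_inv ?_
  rw [Matrix.mul_add, Matrix.mul_one, ← Matrix.mul_assoc, ← Matrix.mul_assoc,
    one_sub_mul_mul_comm, Matrix.mul_assoc V, mul_nonsing_inv _ h, Matrix.mul_one, sub_add_cancel]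

lemma one_sub_mul_mul_inv_one_sub_mul_mul_one_sub_mul (Z W : Matrix m n α) (V Y : Matrix n m α)
    (h : IsUnit (1 - W * V).det) :
    (1 - Z * V) * (1 - W * V)⁻¹ * (1 - W * Y) =
      (1 - Z * Y) + (Z - W) * (1 - V * W)⁻¹ * (Y - V) := by
  have h' : IsUnit (1 - V * W).det := det_one_sub_mul_comm W V ▸ h
  set C := (1 - V * W)⁻¹
  have hC : C * (1 - V * W) = 1 := nonsing_inv_mul _ h'
  calc (1 - Z * V) * (1 - W * V)⁻¹ * (1 - W * Y)
      = ((1 - W * V) + (W - Z) * V) * (1 - W * V)⁻¹ * (1 - W * Y) := by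
        congr 2
        simp only [Matrix.sub_mul]
        abel
    _ = (1 + (W - Z) * (C * V)) * (1 - W * Y) := by
        rw [Matrix.add_mul, mul_nonsing_inv _ h, Matrix.mul_assoc (W - Z),
          mul_inv_one_sub_mul_comm]
    _ = 1 - W * Y + (W - Z) * (C * (1 - V * W)) * Y + (W - Z) * C * (V - Y) := by
        simp only [Matrix.add_mul, Matrix.sub_mul, Matrix.mul_sub, Matrix.one_mul,
          Matrix.mul_one, Matrix.mul_assoc]
        abel
    _ = (1 - Z * Y) + (Z - W) * C * (Y - V) := by
        rw [hC, Matrix.mul_one]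
        simp only [Matrix.sub_mul, Matrix.mul_sub]
        abel

end PushThrough

section Positivity

variable {𝕜 m n : Type*} [RCLike 𝕜] [Fintype n]

lemma PosDef.mul_mul_conjTranspose_eq_zero_iff {C : Matrix n n 𝕜} (hC : C.PosDef)
    {X : Matrix m n 𝕜} : X * C * Xᴴ = 0 ↔ X = 0 := by
  refine ⟨fun h => funext fun i => ?_, fun h => by simp [h]⟩
  by_contra hi
  have hpos := hC.dotProduct_mulVec_pos (star_ne_zero.mpr hi)
  have hdiag : (X * C * Xᴴ) i i = X i ᵥ* C ⬝ᵥ star (X i) := by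
    simp [Matrix.mul_apply, dotProduct, vecMul, Finset.sum_mul]
  rw [star_star, dotProduct_mulVec, ← hdiag, h] at hpos
  exact lt_irrefl _ hpos

variable [DecidableEq n]

lemma PosDef.one_sub_conjTranspose_mul_self [Fintype m] [DecidableEq m] {W : Matrix m n 𝕜}
    (hW : (1 - W * Wᴴ).PosDef) : (1 - Wᴴ * W).PosDef := by
  rw [← posDef_inv_iff, inv_one_sub_mul _ _ hW.det_pos.ne'.isUnit]
  exact PosDef.one.add_posSemidef (hW.inv.posSemidef.conjTranspose_mul_mul_same W)

lemma IsHermitian.det_one_add {Q : Matrix n n 𝕜} (hQ : Q.IsHermitian) :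
    (1 + Q).det = ∏ i, (1 + hQ.eigenvalues i : 𝕜) := by
  have hcfc : 1 + Q = cfc (fun x : ℝ => 1 + x) Q := by
    rw [cfc_const_add (1 : ℝ) (fun x => x) Q, cfc_id' ℝ Q, map_one]
  rw [hcfc, hQ.cfc_eq]
  simp [IsHermitian.cfc, -Unitary.conjStarAlgAut_apply]

lemma PosSemidef.one_lt_det_one_add {Q : Matrix n n 𝕜} (hQ : Q.PosSemidef) (hQ0 : Q ≠ 0) :
    1 < (1 + Q).det := by
  obtain ⟨j, hj⟩ : ∃ j, hQ.isHermitian.eigenvalues j ≠ 0 := by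
    by_contra! h
    exact hQ0 (hQ.isHermitian.eigenvalues_eq_zero_iff.mp (funext h))
  rw [hQ.isHermitian.det_one_add]
  calc (1 : 𝕜) = ∏ _i : n, 1 := Finset.prod_const_one.symm
    _ < _ := Finset.prod_lt_prod (fun _ _ => zero_lt_one)
      (fun i _ => le_add_of_nonneg_right (RCLike.ofReal_nonneg.mpr (hQ.eigenvalues_nonneg i)))
      ⟨j, Finset.mem_univ j, lt_add_of_pos_right _
        (RCLike.ofReal_pos.mpr ((hQ.eigenvalues_nonneg j).lt_of_ne' hj))⟩

open scoped MatrixOrder in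
lemma PosDef.det_lt_det_add {A P : Matrix n n 𝕜} (hA : A.PosDef) (hP : P.PosSemidef)
    (hP0 : P ≠ 0) : A.det < (A + P).det := by
  obtain ⟨B, rfl⟩ := CStarAlgebra.nonneg_iff_eq_star_mul_self.mp hP.nonneg
  have hQ0 : B * A⁻¹ * Bᴴ ≠ 0 := by
    rw [Ne, hA.inv.mul_mul_conjTranspose_eq_zero_iff]
    rintro rfl
    simp at hP0
  rw [star_eq_conjTranspose, det_add_mul _ _ hA.det_pos.ne'.isUnit]
  exact lt_mul_of_one_lt_right hA.det_pos
    ((hA.inv.posSemidef.mul_mul_conjTranspose_same B).one_lt_det_one_add hQ0)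

end Positivity

end Matrix

section

variable {𝕜 m n : Type*} [RCLike 𝕜] [Fintype m] [Fintype n] [DecidableEq m] [DecidableEq n]

lemma norm_sq_det_one_sub_mul_conjTranspose (Z W : Matrix m n 𝕜)
    (hW : IsUnit (1 - W * Wᴴ).det) :
    (‖(1 - Z * Wᴴ).det‖ ^ 2 : 𝕜) =
      (1 - Z * Zᴴ + (Z - W) * (1 - Wᴴ * W)⁻¹ * (Z - W)ᴴ).det * (1 - W * Wᴴ).det := by
  have hconj : (1 - W * Zᴴ).det = star (1 - Z * Wᴴ).det := by
    rw [← det_conjTranspose]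
    simp [conjTranspose_sub, conjTranspose_mul]
  have hinv : (1 - W * Wᴴ)⁻¹.det * (1 - W * Wᴴ).det = 1 := by
    rw [← det_mul, nonsing_inv_mul _ hW, det_one]
  rw [conjTranspose_sub, ← one_sub_mul_mul_inv_one_sub_mul_mul_one_sub_mul _ _ _ _ hW, det_mul,
    det_mul, hconj, RCLike.star_def]
  linear_combination -((1 - W * Wᴴ)⁻¹.det * (1 - W * Wᴴ).det) * RCLike.mul_conj (1 - Z * Wᴴ).det
    - (‖(1 - Z * Wᴴ).det‖ ^ 2 : 𝕜) * hinv

variable {Z W : Matrix m n 𝕜}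

lemma det_mul_det_lt_norm_sq (hZ : (1 - Z * Zᴴ).PosDef) (hW : (1 - W * Wᴴ).PosDef)
    (hZW : Z ≠ W) : (1 - Z * Zᴴ).det * (1 - W * Wᴴ).det < (‖(1 - Z * Wᴴ).det‖ ^ 2 : 𝕜) := by
  have hC := hW.one_sub_conjTranspose_mul_self.inv
  rw [norm_sq_det_one_sub_mul_conjTranspose Z W hW.det_pos.ne'.isUnit]
  refine mul_lt_mul_of_pos_right (hZ.det_lt_det_add
    (hC.posSemidef.mul_mul_conjTranspose_same _) ?_) hW.det_pos
  rwa [Ne, hC.mul_mul_conjTranspose_eq_zero_iff, sub_eq_zero]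

lemma det_mul_det_eq_norm_sq_iff (hZ : (1 - Z * Zᴴ).PosDef) (hW : (1 - W * Wᴴ).PosDef) :
    (1 - Z * Zᴴ).det * (1 - W * Wᴴ).det = (‖(1 - Z * Wᴴ).det‖ ^ 2 : 𝕜) ↔ Z = W := by
  refine ⟨fun h => by_contra fun hZW => (det_mul_det_lt_norm_sq hZ hW hZW).ne h, ?_⟩
  rintro rfl
  rw [RCLike.norm_of_nonneg' hZ.det_pos.le, sq]

lemma det_mul_det_le_norm_sq (hZ : (1 - Z * Zᴴ).PosDef) (hW : (1 - W * Wᴴ).PosDef) :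
    (1 - Z * Zᴴ).det * (1 - W * Wᴴ).det ≤ (‖(1 - Z * Wᴴ).det‖ ^ 2 : 𝕜) := by
  rcases eq_or_ne Z W with rfl | hZW
  · exact ((det_mul_det_eq_norm_sq_iff hZ hZ).mpr rfl).le
  · exact (det_mul_det_lt_norm_sq hZ hW hZW).le

end

theorem det_product_le_sq_abs_det_typeI_general (p q : ℕ)
    (Z W : Matrix (Fin p) (Fin q) ℂ)
    (hZ : Z ∈ typeIDomain p q) (hW : W ∈ typeIDomain p q) :
    ((1 - Z * Zᴴ).det.re * (1 - W * Wᴴ).det.re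
        ≤ ‖(1 - Z * Wᴴ).det‖ ^ 2) ∧
    ((1 - Z * Zᴴ).det.re * (1 - W * Wᴴ).det.re
        = ‖(1 - Z * Wᴴ).det‖ ^ 2 ↔ Z = W) := by
  have ofReal_re_det {A : Matrix (Fin p) (Fin p) ℂ} (hA : A.PosDef) : (A.det.re : ℂ) = A.det :=
    (Complex.eq_re_of_ofReal_le (r := 0) (by simpa using hA.det_pos.le)).symm
  have hcast : (((1 - Z * Zᴴ).det.re * (1 - W * Wᴴ).det.re : ℝ) : ℂ)
      = (1 - Z * Zᴴ).det * (1 - W * Wᴴ).det := by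
    rw [Complex.ofReal_mul, ofReal_re_det hZ, ofReal_re_det hW]
  rw [← Complex.real_le_real, ← Complex.ofReal_inj, hcast]
  push_cast
  exact ⟨det_mul_det_le_norm_sq hZ hW, det_mul_det_eq_norm_sq_iff hZ hW⟩

/-- For `Z, W` in the type I bounded symmetric domain `D_{p,q}` one has
`det(I − Z Zᴴ) · det(I − W Wᴴ) ≤ |det(I − Z Wᴴ)|²`, with equality iff `Z = W`. -/
theorem det_product_le_sq_abs_det_typeI (p q : ℕ) (hp : 1 ≤ p) (hq : 1 ≤ q)
    (Z W : Matrix (Fin p) (Fin q) ℂ)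
    (hZ : Z ∈ typeIDomain p q) (hW : W ∈ typeIDomain p q) :
    ((1 - Z * Zᴴ).det.re * (1 - W * Wᴴ).det.re
        ≤ ‖(1 - Z * Wᴴ).det‖ ^ 2) ∧
    ((1 - Z * Zᴴ).det.re * (1 - W * Wᴴ).det.re
        = ‖(1 - Z * Wᴴ).det‖ ^ 2 ↔ Z = W) :=
  det_product_le_sq_abs_det_typeI_general p q Z W hZ hW
end
end

section
/- Let 1 ≤ p ≤ q be integers, let w₀ ∈ M_{p×q}(ℂ) be a diagonal matrix, i.e. (w₀)_{ij} = 0 for i ≠ j, with diagonal entries d_i := (w₀)_{ii} satisfying |d_i| < 1 for all 1 ≤ i ≤ p, and let u(W) := −log det(I_p − W Wᴴ), which is defined and smooth on a neighborhood of w₀ in M_{p×q}(ℂ). For 1 ≤ i ≤ p and 1 ≤ j ≤ q, let E_{ij} ∈ M_{p×q}(ℂ) denote the matrix unit with (i,j) entry 1 and all other entries 0, and let L_{ij} denote the Laplacian at t = 0 of the function t ↦ u(w₀ + t E_{ij}) of the complex variable t (viewing ℂ ≅ ℝ²). Then: (a) if i = j, L_{ii} = 4/(1 − |d_i|²)²;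 (b) if i ≠ j and j ≤ p, L_{ij} = 4/((1 − |d_i|²)(1 − |d_j|²)); (c) if j > p, L_{ij} = 4/(1 − |d_i|²). -/
open Matrix
open scoped ComplexConjugate

noncomputable section

attribute [local instance] Matrix.normedAddCommGroup Matrix.normedSpace

/-- The Laplacian at `0` of a function of one complex variable `t = x + iy`,
namely `∂²/∂x² + ∂²/∂y²` evaluated at `0`. -/
def laplacianAt (f : ℂ → ℝ) : ℝ :=
  iteratedDeriv 2 (fun x : ℝ => f (x : ℂ)) 0 +
  iteratedDeriv 2 (fun y : ℝ => f ((y : ℂ) * Complex.I)) 0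

/-- `u(W) = − log det(I − W Wᴴ)` on the type I domain. -/
def negLogDetI (p q : ℕ) (W : Matrix (Fin p) (Fin q) ℂ) : ℝ :=
  -Real.log ((1 - W * Wᴴ).det.re)

/-!
For `W = w₀ + t E_{ij}` with `w₀` diagonal, `I - W Wᴴ` differs from `diag (1 - |d_k|²)` only in
the entries `(i, i)`, `(i, j)` and `(j, i)`. So `det (I - W Wᴴ)` is a positive constant `K` times
`c - |a + t|²`, with `(c, a) = (1, d_i)` when `j = i`, `((1 - |d_i|²)(1 - |d_j|²), 0)` when
`i ≠ j ≤ p` (a `2 × 2` determinant, using `|d_j|² + (1 - |d_j|²) = 1`), and `(1 - |d_i|², 0)` when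
`j > p`. Along each real line through `0`, `-log (K (c - |a + t|²))` is `-log (K (α - s²))` up to a
shift, whose second derivative is explicit; adding the two gives `4c / (c - |a|²)²`.
-/

open Finset Equiv

lemma hasDerivAt_neg_log_mul_sub_sq {K α s : ℝ} (hK : 0 < K) (hs : s ^ 2 < α) :
    HasDerivAt (fun s => -Real.log (K * (α - s ^ 2))) (2 * s / (α - s ^ 2)) s := by
  have hpos : 0 < K * (α - s ^ 2) := mul_pos hK (sub_pos.mpr hs)
  have h := ((((hasDerivAt_pow 2 s).const_sub α).const_mul K).log hpos.ne').fun_neg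
  refine h.congr_deriv ?_
  field_simp
  ring

lemma iteratedDeriv_two_neg_log_mul_sub_sq {K α x : ℝ} (hK : 0 < K) (hx : x ^ 2 < α) :
    iteratedDeriv 2 (fun s => -Real.log (K * (α - s ^ 2))) x
      = 2 * (α + x ^ 2) / (α - x ^ 2) ^ 2 := by
  have hderiv : deriv (fun s => -Real.log (K * (α - s ^ 2))) =ᶠ[nhds x]
      fun s => 2 * s / (α - s ^ 2) := by
    filter_upwards [(isOpen_lt (continuous_pow 2) continuous_const).mem_nhds hx] with s hs
    exact (hasDerivAt_neg_log_mul_sub_sq hK hs).deriv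
  have hne : α - x ^ 2 ≠ 0 := (sub_pos.mpr hx).ne'
  have h2 := ((hasDerivAt_id' x).const_mul 2).fun_div ((hasDerivAt_pow 2 x).const_sub α) hne
  rw [iteratedDeriv_succ, iteratedDeriv_one, hderiv.deriv_eq, h2.deriv]
  field_simp
  ring

lemma laplacianAt_neg_log_mul_sub_sq_norm {K c : ℝ} {a : ℂ} (hK : 0 < K) (ha : ‖a‖ ^ 2 < c) :
    laplacianAt (fun t => -Real.log (K * (c - ‖a + t‖ ^ 2))) = 4 * c / (c - ‖a‖ ^ 2) ^ 2 := by
  have hnorm : ∀ z : ℂ, ‖z‖ ^ 2 = z.re ^ 2 + z.im ^ 2 := fun z => by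
    rw [Complex.sq_norm, Complex.normSq_apply]; ring
  have hre : (fun x : ℝ => -Real.log (K * (c - ‖a + x‖ ^ 2)))
      = fun x => -Real.log (K * ((c - a.im ^ 2) - (a.re + x) ^ 2)) := by
    funext x
    simp only [hnorm, Complex.add_re, Complex.add_im, Complex.ofReal_re, Complex.ofReal_im]
    ring_nf
  have him : (fun y : ℝ => -Real.log (K * (c - ‖a + y * Complex.I‖ ^ 2)))
      = fun y => -Real.log (K * ((c - a.re ^ 2) - (a.im + y) ^ 2)) := by
    funext y
    simp only [hnorm, Complex.add_re, Complex.add_im, Complex.mul_re, Complex.mul_im,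
      Complex.ofReal_re, Complex.ofReal_im, Complex.I_re, Complex.I_im]
    ring_nf
  rw [hnorm a] at ha ⊢
  rw [laplacianAt, hre, him,
    iteratedDeriv_comp_const_add 2 (fun s => -Real.log (K * ((c - a.im ^ 2) - s ^ 2))),
    iteratedDeriv_comp_const_add 2 (fun s => -Real.log (K * ((c - a.re ^ 2) - s ^ 2)))]
  simp only [add_zero]
  rw [iteratedDeriv_two_neg_log_mul_sub_sq hK (by linarith),
    iteratedDeriv_two_neg_log_mul_sub_sq hK (by linarith),
    show c - a.im ^ 2 - a.re ^ 2 = c - (a.re ^ 2 + a.im ^ 2) by ring,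
    show c - a.re ^ 2 - a.im ^ 2 = c - (a.re ^ 2 + a.im ^ 2) by ring]
  have hne : c - (a.re ^ 2 + a.im ^ 2) ≠ 0 := by linarith
  field_simp
  ring

lemma laplacianAt_neg_log_mul_sub_sq_norm_of_pos {K c : ℝ} (hK : 0 < K) (hc : 0 < c) :
    laplacianAt (fun t => -Real.log (K * (c - ‖t‖ ^ 2))) = 4 / c := by
  have h := laplacianAt_neg_log_mul_sub_sq_norm (a := 0) hK (by simpa using hc)
  simp only [zero_add] at h
  rw [h, norm_zero, zero_pow two_ne_zero, sub_zero]
  field_simp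

theorem Equiv.Perm.eq_one_or_eq_swap_of_forall_apply_ne {n : Type*} [DecidableEq n]
    {σ : Perm n} {i j : n} (hij : i ≠ j)
    (h : ∀ k, σ k ≠ k → (σ k, k) = (i, j) ∨ (σ k, k) = (j, i)) :
    σ = 1 ∨ σ = swap i j := by
  by_cases hi : σ i = i
  · refine Or.inl (Perm.ext fun k => ?_)
    by_contra hk
    rcases h k hk with h | h <;> simp only [Prod.mk.injEq] at h
    · exact hij (σ.injective (by rw [hi, ← h.2, h.1]))
    · exact hij (by rw [← hi, ← h.2, h.1])
  · refine Or.inr (Perm.ext fun k => ?_)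
    have hσi : σ i = j := by simpa [hij] using h i hi
    have hσj : σ j = i := by
      have hj : σ j ≠ j := fun h => hij (σ.injective (h.trans hσi.symm)).symm
      simpa [hij.symm] using h j hj
    rw [swap_apply_def]
    split_ifs with hki hkj
    · rw [hki, hσi]
    · rw [hkj, hσj]
    · by_contra hk
      rcases h k hk with h | h <;> simp only [Prod.mk.injEq] at h
      · exact hkj h.2
      · exact hki h.2

theorem det_eq_of_offDiag_eq_zero_outside_pair {n R : Type*} [Fintype n] [DecidableEq n]
    [CommRing R] (M : Matrix n n R) {i j : n} (hij : i ≠ j)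
    (hM : ∀ k l, k ≠ l → (k, l) ≠ (i, j) → (k, l) ≠ (j, i) → M k l = 0) :
    M.det = (M i i * M j j - M i j * M j i) * ∏ k ∈ (univ.erase i).erase j, M k k := by
  have hj : j ∈ univ.erase i := mem_erase.mpr ⟨hij.symm, mem_univ j⟩
  have hprod : ∀ f : n → R, ∏ k, f k = f i * f j * ∏ k ∈ (univ.erase i).erase j, f k :=
    fun f => by rw [← mul_prod_erase _ f (mem_univ i), ← mul_prod_erase _ f hj, mul_assoc]
  have hvanish : ∀ σ : Perm n, σ ≠ 1 ∧ σ ≠ swap i j → Perm.sign σ • ∏ k, M (σ k) k = 0 := by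
    rintro σ ⟨h1, hswap⟩
    obtain ⟨k, hk⟩ : ∃ k, M (σ k) k = 0 := by
      by_contra! hne
      refine (Perm.eq_one_or_eq_swap_of_forall_apply_ne hij fun k hk => ?_).elim h1 hswap
      by_contra! h
      exact hne k (hM _ _ hk h.1 h.2)
    exact smul_eq_zero_of_right _ (prod_eq_zero (mem_univ k) hk)
  rw [det_apply, Fintype.sum_eq_add 1 (swap i j) (Ne.symm (mt swap_eq_one_iff.mp hij)) hvanish,
    hprod, hprod, Perm.sign_one, Perm.sign_swap hij]
  have hfix : ∏ k ∈ (univ.erase i).erase j, M (swap i j k) k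
      = ∏ k ∈ (univ.erase i).erase j, M k k :=
    prod_congr rfl fun k hk => by
      rw [swap_apply_of_ne_of_ne (ne_of_mem_erase (mem_of_mem_erase hk)) (ne_of_mem_erase hk)]
  simp only [Perm.coe_one, id_eq, one_smul, swap_apply_left, swap_apply_right, hfix,
    Units.neg_smul]
  ring

theorem add_smul_single_mul_conjTranspose_apply {m n R : Type*} [Fintype n] [DecidableEq m]
    [DecidableEq n] [CommRing R] [StarRing R] (A : Matrix m n R) (i : m) (j : n) (t : R)
    (k l : m) :
    ((A + t • single i j 1) * (A + t • single i j 1)ᴴ : Matrix m m R) k l =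
      (A * Aᴴ) k l + (if k = i then t * star (A l j) else 0)
        + (if l = i then star t * A k j else 0) + (if k = i ∧ l = i then t * star t else 0) := by
  simp only [conjTranspose_add, conjTranspose_smul, conjTranspose_single, star_one,
    Matrix.add_mul, Matrix.mul_add, Matrix.smul_mul, Matrix.mul_smul, single_mul_single_same,
    Matrix.add_apply, Matrix.smul_apply, smul_eq_mul]
  by_cases hk : k = i <;> by_cases hl : l = i <;>
    simp [single_mul_apply_of_ne, mul_single_apply_of_ne, hk, hl, eq_comm (a := i)]
  ring

def IsRectDiag {α : Type*} [Zero α] {p q : ℕ} (w : Matrix (Fin p) (Fin q) α) : Prop :=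
  ∀ (i : Fin p) (j : Fin q), (i : ℕ) ≠ (j : ℕ) → w i j = 0

section DiagonalPoint

variable {p q : ℕ} (hpq : p ≤ q) {w₀ : Matrix (Fin p) (Fin q) ℂ}

theorem IsRectDiag.mul_conjTranspose_eq_diagonal (hdiag : IsRectDiag w₀) :
    w₀ * w₀ᴴ = diagonal fun k => ((‖w₀ k (Fin.castLE hpq k)‖ ^ 2 : ℝ) : ℂ) := by
  ext k l
  rw [mul_apply, Fintype.sum_eq_single (Fin.castLE hpq k)]
  · by_cases hkl : k = l
    · subst hkl; simp [Complex.mul_conj']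
    · rw [diagonal_apply_ne _ hkl, conjTranspose_apply,
        hdiag l _ fun h => hkl (Fin.ext (by simpa using h.symm)), star_zero, mul_zero]
  · intro m hm
    rw [hdiag k m (fun h => hm (Fin.ext h.symm)), zero_mul]

theorem IsRectDiag.apply_castLE (hdiag : IsRectDiag w₀) (k l : Fin p) :
    w₀ k (Fin.castLE hpq l) = if k = l then w₀ l (Fin.castLE hpq l) else 0 := by
  split_ifs with hkl
  · rw [hkl]
  · exact hdiag k _ fun h => hkl (Fin.ext h)

theorem IsRectDiag.one_sub_mul_conjTranspose_single_apply (hdiag : IsRectDiag w₀)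
    (i : Fin p) (j : Fin q) (t : ℂ) (k l : Fin p) :
    (1 - (w₀ + t • single i j 1) * (w₀ + t • single i j 1)ᴴ : Matrix (Fin p) (Fin p) ℂ) k l =
      (if k = l then ((1 - ‖w₀ k (Fin.castLE hpq k)‖ ^ 2 : ℝ) : ℂ) else 0)
        - (if k = i then t * conj (w₀ l j) else 0) - (if l = i then conj t * w₀ k j else 0)
        - (if k = i ∧ l = i then t * conj t else 0) := by
  rw [Matrix.sub_apply, add_smul_single_mul_conjTranspose_apply,
    hdiag.mul_conjTranspose_eq_diagonal hpq, one_apply, diagonal_apply]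
  simp only [Complex.star_def]
  split_ifs <;> first | tauto | (push_cast; ring)

theorem IsRectDiag.one_sub_mul_conjTranspose_single_castLE_apply (hdiag : IsRectDiag w₀)
    (i j : Fin p) (t : ℂ) (k l : Fin p) :
    (1 - (w₀ + t • single i (Fin.castLE hpq j) 1) * (w₀ + t • single i (Fin.castLE hpq j) 1)ᴴ :
        Matrix (Fin p) (Fin p) ℂ) k l =
      (if k = l then ((1 - ‖w₀ k (Fin.castLE hpq k)‖ ^ 2 : ℝ) : ℂ) else 0)
        - (if k = i ∧ l = j then t * conj (w₀ j (Fin.castLE hpq j)) else 0)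
        - (if k = j ∧ l = i then conj t * w₀ j (Fin.castLE hpq j) else 0)
        - (if k = i ∧ l = i then t * conj t else 0) := by
  rw [hdiag.one_sub_mul_conjTranspose_single_apply hpq, hdiag.apply_castLE hpq l j,
    hdiag.apply_castLE hpq k j]
  split_ifs <;> simp_all

theorem IsRectDiag.det_one_sub_mul_conjTranspose_single_self (hdiag : IsRectDiag w₀)
    (i : Fin p) (t : ℂ) :
    (1 - (w₀ + t • single i (Fin.castLE hpq i) 1) *
        (w₀ + t • single i (Fin.castLE hpq i) 1)ᴴ).det
      = (((∏ k ∈ univ.erase i, (1 - ‖w₀ k (Fin.castLE hpq k)‖ ^ 2)) *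
          (1 - ‖w₀ i (Fin.castLE hpq i) + t‖ ^ 2) : ℝ) : ℂ) := by
  have hM : (1 - (w₀ + t • single i (Fin.castLE hpq i) 1) *
        (w₀ + t • single i (Fin.castLE hpq i) 1)ᴴ)
      = diagonal (Function.update (fun k => ((1 - ‖w₀ k (Fin.castLE hpq k)‖ ^ 2 : ℝ) : ℂ)) i
          ((1 - ‖w₀ i (Fin.castLE hpq i) + t‖ ^ 2 : ℝ) : ℂ)) := by
    ext k l
    rw [hdiag.one_sub_mul_conjTranspose_single_castLE_apply hpq, diagonal_apply]
    by_cases hkl : k = l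
    · subst hkl
      by_cases hki : k = i
      · subst hki
        simp only [if_true, and_self, Function.update_self]
        push_cast
        rw [← Complex.mul_conj', ← Complex.mul_conj', map_add]
        ring
      · simp [hki]
    · have hkli : ¬(k = i ∧ l = i) := fun h => hkl (h.1.trans h.2.symm)
      simp [hkl, hkli]
  rw [hM, det_diagonal, prod_update_of_mem (mem_univ i), sdiff_singleton_eq_erase]
  push_cast
  ring

theorem IsRectDiag.det_one_sub_mul_conjTranspose_single_of_le (hdiag : IsRectDiag w₀)
    (i : Fin p) {j : Fin q} (hj : p ≤ (j : ℕ)) (t : ℂ) :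
    (1 - (w₀ + t • single i j 1) * (w₀ + t • single i j 1)ᴴ).det
      = (((∏ k ∈ univ.erase i, (1 - ‖w₀ k (Fin.castLE hpq k)‖ ^ 2)) *
          ((1 - ‖w₀ i (Fin.castLE hpq i)‖ ^ 2) - ‖t‖ ^ 2) : ℝ) : ℂ) := by
  have hcol : ∀ k : Fin p, w₀ k j = 0 := fun k => hdiag k j (by omega)
  have hM : (1 - (w₀ + t • single i j 1) * (w₀ + t • single i j 1)ᴴ)
      = diagonal (Function.update (fun k => ((1 - ‖w₀ k (Fin.castLE hpq k)‖ ^ 2 : ℝ) : ℂ)) i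
          (((1 - ‖w₀ i (Fin.castLE hpq i)‖ ^ 2) - ‖t‖ ^ 2 : ℝ) : ℂ)) := by
    ext k l
    rw [hdiag.one_sub_mul_conjTranspose_single_apply hpq, hcol, hcol, diagonal_apply]
    by_cases hkl : k = l
    · subst hkl
      by_cases hki : k = i
      · subst hki
        simp only [if_true, and_self, Function.update_self, map_zero, mul_zero, sub_zero]
        push_cast
        rw [← Complex.mul_conj', ← Complex.mul_conj']
      · simp [hki]
    · have hkli : ¬(k = i ∧ l = i) := fun h => hkl (h.1.trans h.2.symm)
      simp [hkl, hkli]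
  rw [hM, det_diagonal, prod_update_of_mem (mem_univ i), sdiff_singleton_eq_erase]
  push_cast
  ring

theorem IsRectDiag.det_one_sub_mul_conjTranspose_single_of_ne (hdiag : IsRectDiag w₀)
    {i j : Fin p} (hij : i ≠ j) (t : ℂ) :
    (1 - (w₀ + t • single i (Fin.castLE hpq j) 1) *
        (w₀ + t • single i (Fin.castLE hpq j) 1)ᴴ).det
      = (((∏ k ∈ (univ.erase i).erase j, (1 - ‖w₀ k (Fin.castLE hpq k)‖ ^ 2)) *
          ((1 - ‖w₀ i (Fin.castLE hpq i)‖ ^ 2) * (1 - ‖w₀ j (Fin.castLE hpq j)‖ ^ 2)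
            - ‖t‖ ^ 2) : ℝ) : ℂ) := by
  set M : Matrix (Fin p) (Fin p) ℂ := 1 - (w₀ + t • single i (Fin.castLE hpq j) 1) *
    (w₀ + t • single i (Fin.castLE hpq j) 1)ᴴ with hM
  have hentry := hdiag.one_sub_mul_conjTranspose_single_castLE_apply hpq i j t
  rw [← hM] at hentry
  have hoff : ∀ k l, k ≠ l → (k, l) ≠ (i, j) → (k, l) ≠ (j, i) → M k l = 0 := by
    intro k l hkl hij' hji'
    simp only [ne_eq, Prod.mk.injEq] at hij' hji'
    rw [hentry, if_neg hkl, if_neg hij', if_neg hji', if_neg fun h => hkl (h.1.trans h.2.symm)]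
    ring
  have hrest : ∏ k ∈ (univ.erase i).erase j, M k k
      = ∏ k ∈ (univ.erase i).erase j, ((1 - ‖w₀ k (Fin.castLE hpq k)‖ ^ 2 : ℝ) : ℂ) :=
    prod_congr rfl fun k hk => by
      simp [hentry, ne_of_mem_erase hk, ne_of_mem_erase (mem_of_mem_erase hk)]
  rw [det_eq_of_offDiag_eq_zero_outside_pair M hij hoff, hrest]
  simp only [hentry, ↓reduceIte, hij, hij.symm, and_self, and_true, and_false, sub_zero,
    zero_sub, mul_neg, neg_mul, neg_neg]
  push_cast
  rw [show t * conj (w₀ j (Fin.castLE hpq j)) * (conj t * w₀ j (Fin.castLE hpq j))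
      = t * conj t * (w₀ j (Fin.castLE hpq j) * conj (w₀ j (Fin.castLE hpq j))) by ring,
    Complex.mul_conj', Complex.mul_conj']
  ring

end DiagonalPoint

theorem laplacian_negLogDet_at_diagonal_general (p q : ℕ) (hpq : p ≤ q)
    (w₀ : Matrix (Fin p) (Fin q) ℂ)
    (hdiag : ∀ (i : Fin p) (j : Fin q), (i : ℕ) ≠ (j : ℕ) → w₀ i j = 0)
    (hd : ∀ i : Fin p, ‖w₀ i (Fin.castLE hpq i)‖ < 1) :
    (∀ i : Fin p,
      laplacianAt (fun t : ℂ =>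
          negLogDetI p q (w₀ + t • single i (Fin.castLE hpq i) (1 : ℂ)))
        = 4 / (1 - ‖w₀ i (Fin.castLE hpq i)‖ ^ 2) ^ 2) ∧
    (∀ (i : Fin p) (j : Fin q) (hj : (j : ℕ) < p), (i : ℕ) ≠ (j : ℕ) →
      laplacianAt (fun t : ℂ =>
          negLogDetI p q (w₀ + t • single i j (1 : ℂ)))
        = 4 / ((1 - ‖w₀ i (Fin.castLE hpq i)‖ ^ 2) *
            (1 - ‖w₀ ⟨(j : ℕ), hj⟩ (Fin.castLE hpq ⟨(j : ℕ), hj⟩)‖ ^ 2))) ∧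
    (∀ (i : Fin p) (j : Fin q), p ≤ (j : ℕ) →
      laplacianAt (fun t : ℂ =>
          negLogDetI p q (w₀ + t • single i j (1 : ℂ)))
        = 4 / (1 - ‖w₀ i (Fin.castLE hpq i)‖ ^ 2)) := by
  have hd2 : ∀ k, ‖w₀ k (Fin.castLE hpq k)‖ ^ 2 < 1 := fun k =>
    pow_lt_one₀ (norm_nonneg _) (hd k) two_ne_zero
  have hK : ∀ s : Finset (Fin p), 0 < ∏ k ∈ s, (1 - ‖w₀ k (Fin.castLE hpq k)‖ ^ 2) :=
    fun s => prod_pos fun k _ => sub_pos.mpr (hd2 k)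
  refine ⟨fun i => ?_, fun i j hj hij => ?_, fun i j hj => ?_⟩
  · simp only [negLogDetI, IsRectDiag.det_one_sub_mul_conjTranspose_single_self hpq hdiag,
      Complex.ofReal_re]
    rw [laplacianAt_neg_log_mul_sub_sq_norm (hK _) (hd2 i), mul_one]
  · obtain ⟨j, rfl⟩ : ∃ j' : Fin p, Fin.castLE hpq j' = j := ⟨⟨j, hj⟩, rfl⟩
    have hij' : i ≠ j := fun h => hij (by rw [h, Fin.val_castLE])
    simp only [negLogDetI, IsRectDiag.det_one_sub_mul_conjTranspose_single_of_ne hpq hdiag hij',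
      Complex.ofReal_re, Fin.val_castLE, Fin.eta]
    exact laplacianAt_neg_log_mul_sub_sq_norm_of_pos (hK _)
      (mul_pos (sub_pos.mpr (hd2 i)) (sub_pos.mpr (hd2 j)))
  · simp only [negLogDetI, IsRectDiag.det_one_sub_mul_conjTranspose_single_of_le hpq hdiag i hj,
      Complex.ofReal_re]
    exact laplacianAt_neg_log_mul_sub_sq_norm_of_pos (hK _) (sub_pos.mpr (hd2 i))

/-- At a diagonal point `w₀` of `D_{p,q}` with diagonal entries `d_i`, the Laplacian of
`u(W) = −log det(I − W Wᴴ)` along the matrix-unit direction `E_{ij}` equals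
`4/(1−|d_i|²)²` if `i = j`, `4/((1−|d_i|²)(1−|d_j|²))` if `i ≠ j ≤ p`, and
`4/(1−|d_i|²)` if `j > p`. -/
theorem laplacian_negLogDet_at_diagonal (p q : ℕ) (hp : 1 ≤ p) (hpq : p ≤ q)
    (w₀ : Matrix (Fin p) (Fin q) ℂ)
    (hdiag : ∀ (i : Fin p) (j : Fin q), (i : ℕ) ≠ (j : ℕ) → w₀ i j = 0)
    (hd : ∀ i : Fin p, ‖w₀ i (Fin.castLE hpq i)‖ < 1) :
    (∀ i : Fin p,
      laplacianAt (fun t : ℂ =>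
          negLogDetI p q (w₀ + t • single i (Fin.castLE hpq i) (1 : ℂ)))
        = 4 / (1 - ‖w₀ i (Fin.castLE hpq i)‖ ^ 2) ^ 2) ∧
    (∀ (i : Fin p) (j : Fin q) (hj : (j : ℕ) < p), (i : ℕ) ≠ (j : ℕ) →
      laplacianAt (fun t : ℂ =>
          negLogDetI p q (w₀ + t • single i j (1 : ℂ)))
        = 4 / ((1 - ‖w₀ i (Fin.castLE hpq i)‖ ^ 2) *
            (1 - ‖w₀ ⟨(j : ℕ), hj⟩ (Fin.castLE hpq ⟨(j : ℕ), hj⟩)‖ ^ 2))) ∧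
    (∀ (i : Fin p) (j : Fin q), p ≤ (j : ℕ) →
      laplacianAt (fun t : ℂ =>
          negLogDetI p q (w₀ + t • single i j (1 : ℂ)))
        = 4 / (1 - ‖w₀ i (Fin.castLE hpq i)‖ ^ 2)) :=
  laplacian_negLogDet_at_diagonal_general p q hpq w₀ hdiag hd
end
end

section
/- Let 1 ≤ p ≤ q be integers, let w₀ ∈ M_{p×q}(ℂ) be a diagonal matrix, i.e. (w₀)_{ij} = 0 for i ≠ j, with diagonal entries d_i := (w₀)_{ii} satisfying |d_i| < 1 for all 1 ≤ i ≤ p, and let u(W) := −log det(I_p − W Wᴴ), defined and smooth near w₀. Then for every X ∈ M_{p×q}(ℂ), the Laplacian at t = 0 of the function t ↦ u(w₀ + t X) of the complex variable t (viewing ℂ ≅ ℝ²) is at least 4 Σ_{i,j} |X_{ij}|². In other words, at every diagonal point of D_{p,q}, the complex Hessian of −log det(I_p − W Wᴴ) dominates the Euclidean (Frobenius) Hermitian form. -/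
open Matrix
open scoped ComplexConjugate

noncomputable section

attribute [local instance] Matrix.normedAddCommGroup Matrix.normedSpace

/-!
Along a real line `s ↦ w₀ + s • Y`, the matrix `1 - W * Wᴴ` is the quadratic path
`D - s • G - s² • C` with `D = 1 - w₀ * w₀ᴴ` diagonal and positive, `G = Y * w₀ᴴ + w₀ * Yᴴ`
Hermitian and `C = Y * Yᴴ`. Differentiating Jacobi's formula once more gives the second
derivative of `-log det` at `s = 0` as `(Im tr D⁻¹G)² + Re tr (D⁻¹GD⁻¹G) + 2 Re tr (D⁻¹C)`.
The first two terms are nonnegative, and since `D ≤ 1` the last is at least `2 ‖Y‖²`.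
The Laplacian is the sum of these second derivatives for `Y = X` and `Y = I • X`.
-/

open Finset

section Jacobi
variable {𝕜 𝔸 n : Type*} [NontriviallyNormedField 𝕜] [NormedCommRing 𝔸] [NormedAlgebra 𝕜 𝔸]
  [Fintype n]

lemma hasDerivAt_mul_apply {A B : 𝕜 → Matrix n n 𝔸} {A' B' : Matrix n n 𝔸} {x : 𝕜}
    (hA : ∀ i j, HasDerivAt (fun s => A s i j) (A' i j) x)
    (hB : ∀ i j, HasDerivAt (fun s => B s i j) (B' i j) x) (i j : n) :
    HasDerivAt (fun s => (A s * B s) i j) ((A' * B x + A x * B') i j) x := by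
  simp only [mul_apply, Matrix.add_apply, ← Finset.sum_add_distrib]
  exact HasDerivAt.fun_sum fun k _ => (hA i k).fun_mul (hB k j)

variable [DecidableEq n]

lemma prod_updateCol_apply (M : Matrix n n 𝔸) (σ : Equiv.Perm n) (i : n) (c : n → 𝔸) :
    ∏ j, M.updateCol i c (σ j) j = (∏ j ∈ univ.erase i, M (σ j) j) * c (σ i) := by
  rw [← Finset.prod_erase_mul _ _ (mem_univ i), updateCol_self]
  congr 1
  exact Finset.prod_congr rfl fun j hj => updateCol_ne (ne_of_mem_erase hj)

theorem hasDerivAt_det {A : 𝕜 → Matrix n n 𝔸} {A' : Matrix n n 𝔸} {x : 𝕜}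
    (hA : ∀ i j, HasDerivAt (fun s => A s i j) (A' i j) x) :
    HasDerivAt (fun s => (A s).det) (trace (adjugate (A x) * A')) x := by
  have hcol : trace (adjugate (A x) * A') = ∑ i, ((A x).updateCol i (fun k => A' k i)).det := by
    simp only [trace, Matrix.diag, mul_apply, ← cramer_apply, cramer_eq_adjugate_mulVec, mulVec,
      dotProduct]
  rw [hcol]
  simp_rw [det_apply, prod_updateCol_apply]
  rw [Finset.sum_comm]
  refine HasDerivAt.fun_sum fun σ _ => ?_
  simp_rw [← Finset.smul_sum]
  refine HasDerivAt.const_smul _ ?_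
  simpa [smul_eq_mul] using HasDerivAt.fun_finsetProd (u := univ) fun i _ => hA (σ i) i

lemma exists_hasDerivAt_adjugate {A : 𝕜 → Matrix n n 𝔸} {A' : Matrix n n 𝔸} {x : 𝕜}
    (hA : ∀ i j, HasDerivAt (fun s => A s i j) (A' i j) x) :
    ∃ Adj' : Matrix n n 𝔸, ∀ i j, HasDerivAt (fun s => adjugate (A s) i j) (Adj' i j) x := by
  refine ⟨fun i j => trace (adjugate ((A x).updateRow j (Pi.single i 1)) * A'.updateRow j 0),
    fun i j => ?_⟩
  simp only [adjugate_apply]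
  refine hasDerivAt_det fun k l => ?_
  rcases eq_or_ne k j with rfl | hk
  · simpa using hasDerivAt_const x _
  · simpa [updateRow_ne hk] using hA k l

end Jacobi

section SecondOrder
variable {𝕜 𝔸 n : Type*} [NontriviallyNormedField 𝕜] [NormedField 𝔸] [NormedAlgebra 𝕜 𝔸]
  [Fintype n] [DecidableEq n]

lemma adjugate_eq_det_smul_nonsing_inv {A : Matrix n n 𝔸} (h : IsUnit A.det) :
    adjugate A = A.det • A⁻¹ := by
  rw [← Matrix.one_mul (adjugate A), ← nonsing_inv_mul A h, Matrix.mul_assoc, mul_adjugate,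
    Matrix.mul_smul, Matrix.mul_one]

theorem hasDerivAt_trace_adjugate_mul {A A' : 𝕜 → Matrix n n 𝔸} {A'' : Matrix n n 𝔸} {x : 𝕜}
    (hA : ∀ i j, HasDerivAt (fun s => A s i j) (A' x i j) x)
    (hA' : ∀ i j, HasDerivAt (fun s => A' s i j) (A'' i j) x) (hx : IsUnit (A x).det) :
    HasDerivAt (fun s => trace (adjugate (A s) * A' s))
      ((A x).det * (trace ((A x)⁻¹ * A' x) ^ 2 - trace ((A x)⁻¹ * A' x * ((A x)⁻¹ * A' x))
        + trace ((A x)⁻¹ * A''))) x := by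
  obtain ⟨Adj', hAdj'⟩ := exists_hasDerivAt_adjugate hA
  -- `Adj'` is determined by differentiating `adjugate A * A = det A • 1`.
  have hprod : Adj' * A x + adjugate (A x) * A' x = trace (adjugate (A x) * A' x) • 1 := by
    ext i j
    refine (hasDerivAt_mul_apply hAdj' hA i j).unique ?_
    simp only [adjugate_mul, Matrix.smul_apply, one_apply, smul_eq_mul]
    exact (hasDerivAt_det hA).mul_const _
  have hAdj'_eq :
      Adj' = (trace (adjugate (A x) * A' x) • 1 - adjugate (A x) * A' x) * (A x)⁻¹ := by
    rw [← hprod, add_sub_cancel_right, mul_nonsing_inv_cancel_right _ _ hx]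
  have htrace : HasDerivAt (fun s => trace (adjugate (A s) * A' s))
      (trace (Adj' * A' x + adjugate (A x) * A'')) x :=
    HasDerivAt.fun_sum fun i _ => hasDerivAt_mul_apply hAdj' hA' i i
  refine htrace.congr_deriv ?_
  rw [hAdj'_eq, adjugate_eq_det_smul_nonsing_inv hx]
  simp only [Matrix.smul_mul, Matrix.sub_mul, Matrix.one_mul,
    Matrix.mul_assoc, trace_add, trace_sub, trace_smul, smul_eq_mul]
  ring

end SecondOrder

lemma iteratedDeriv_two_neg_log {g g' : ℝ → ℝ} {g'' x : ℝ} (hg : ∀ s, HasDerivAt g (g' s) s)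
    (hg' : HasDerivAt g' g'' x) (hx : 0 < g x) :
    iteratedDeriv 2 (fun s => -Real.log (g s)) x = (g' x / g x) ^ 2 - g'' / g x := by
  have hderiv : deriv (fun s => -Real.log (g s)) =ᶠ[nhds x] fun s => -(g' s / g s) := by
    filter_upwards [(hg x).continuousAt.eventually (Ioi_mem_nhds hx)] with s hs
    exact ((hg s).log hs.ne').neg.deriv
  rw [iteratedDeriv_succ, iteratedDeriv_one, hderiv.deriv_eq,
    ((hg'.fun_div (hg x) hx.ne').fun_neg).deriv]
  field_simp
  ring

lemma hasDerivAt_quadratic_path_apply {n : Type*} (D G C : Matrix n n ℂ) (s : ℝ) (i j : n) :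
    HasDerivAt (fun s : ℝ => (D - (s : ℂ) • G - (s : ℂ) ^ 2 • C) i j)
      ((-G - (2 * s : ℂ) • C) i j) s := by
  have hs : HasDerivAt (fun s : ℝ => (s : ℂ)) 1 s := (hasDerivAt_id s).ofReal_comp
  refine (((hasDerivAt_const s (D i j)).fun_sub (hs.mul_const (G i j))).fun_sub
    ((hs.fun_pow 2).mul_const (C i j))).congr_deriv ?_
  simp only [Matrix.sub_apply, Matrix.neg_apply, Matrix.smul_apply, smul_eq_mul]
  push_cast
  ring

section QuadraticPath
variable {n : Type*} [Fintype n] [DecidableEq n]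

theorem iteratedDeriv_two_neg_log_re_det_quadratic_path (D G C : Matrix n n ℂ) {c : ℝ}
    (hc : 0 < c) (hD : D.det = c) :
    iteratedDeriv 2 (fun s : ℝ => -Real.log (D - (s : ℂ) • G - (s : ℂ) ^ 2 • C).det.re) 0 =
      (trace (D⁻¹ * G)).im ^ 2 + (trace (D⁻¹ * G * (D⁻¹ * G))).re
        + 2 * (trace (D⁻¹ * C)).re := by
  set A : ℝ → Matrix n n ℂ := fun s => D - (s : ℂ) • G - (s : ℂ) ^ 2 • C
  set A' : ℝ → Matrix n n ℂ := fun s => -G - (2 * s : ℂ) • C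
  have hA : ∀ s i j, HasDerivAt (fun s => A s i j) (A' s i j) s :=
    hasDerivAt_quadratic_path_apply D G C
  have hA' : ∀ i j, HasDerivAt (fun s => A' s i j) (((-2 : ℂ) • C) i j) 0 := by
    intro i j
    have hs : HasDerivAt (fun s : ℝ => (s : ℂ)) 1 0 := (hasDerivAt_id 0).ofReal_comp
    refine ((hasDerivAt_const (0 : ℝ) (-G i j)).fun_sub
      ((hs.const_mul 2).mul_const (C i j))).congr_deriv ?_
    simp only [Matrix.smul_apply, smul_eq_mul]
    ring
  have hA0 : A 0 = D := by simp [A]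
  have hunit : IsUnit (A 0).det := by rw [hA0, hD]; exact (Complex.ofReal_ne_zero.2 hc.ne').isUnit
  have hg : ∀ s, HasDerivAt (fun s => (A s).det.re) (trace (adjugate (A s) * A' s)).re s :=
    fun s => Complex.reCLM.hasFDerivAt.comp_hasDerivAt s (hasDerivAt_det (hA s))
  have hg' := Complex.reCLM.hasFDerivAt.comp_hasDerivAt 0
    (hasDerivAt_trace_adjugate_mul (hA 0) hA' hunit)
  rw [iteratedDeriv_two_neg_log hg hg' (by rw [hA0, hD]; exact hc)]
  simp only [hA0, A', adjugate_eq_det_smul_nonsing_inv (hA0 ▸ hunit), hD]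
  simp only [Complex.ofReal_zero, mul_zero, zero_smul, sub_zero, Matrix.mul_neg, Matrix.neg_mul,
    neg_neg, trace_neg, Matrix.smul_mul, Matrix.mul_smul, trace_smul, smul_eq_mul,
    Complex.reCLM_apply]
  generalize trace (D⁻¹ * G) = t, trace (D⁻¹ * G * (D⁻¹ * G)) = τ, trace (D⁻¹ * C) = σ
  simp only [Complex.re_ofReal_mul, Complex.ofReal_re]
  field_simp
  simp only [sq, Complex.neg_re, Complex.add_re, Complex.sub_re, Complex.mul_re]
  norm_num
  ring

lemma re_trace_diagonal_mul_mul_self_nonneg {r : n → ℝ} (hr : ∀ i, 0 ≤ r i)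
    {G : Matrix n n ℂ} (hG : G.IsHermitian) :
    0 ≤ (trace (diagonal (fun i => (r i : ℂ)) * G * (diagonal (fun i => (r i : ℂ)) * G))).re := by
  simp only [trace, Matrix.diag, mul_apply, diagonal_apply, ite_mul, zero_mul, Finset.sum_ite_eq,
    Finset.mem_univ, if_true, Complex.re_sum]
  refine Finset.sum_nonneg fun i _ => Finset.sum_nonneg fun k _ => ?_
  have hterm : (r i : ℂ) * star (G k i) * ((r k : ℂ) * G k i) =
      ((r i * r k * ‖G k i‖ ^ 2 : ℝ) : ℂ) := by
    push_cast
    rw [← Complex.mul_conj', Complex.star_def]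
    ring
  rw [← hG.apply i k, hterm, Complex.ofReal_re]
  have := mul_nonneg (hr i) (hr k)
  positivity

lemma sum_norm_sq_le_re_trace_diagonal_mul_mul_conjTranspose {m : Type*} [Fintype m]
    {r : n → ℝ} (hr : ∀ i, 1 ≤ r i) (Y : Matrix n m ℂ) :
    ∑ i, ∑ j, ‖Y i j‖ ^ 2 ≤ (trace (diagonal (fun i => (r i : ℂ)) * (Y * Yᴴ))).re := by
  simp only [trace, Matrix.diag, mul_apply, diagonal_apply, ite_mul, zero_mul, Finset.sum_ite_eq,
    Finset.mem_univ, if_true, conjTranspose_apply, Complex.re_sum]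
  refine Finset.sum_le_sum fun i _ => ?_
  have hrow : ∑ j, Y i j * star (Y i j) = ((∑ j, ‖Y i j‖ ^ 2 : ℝ) : ℂ) := by
    push_cast
    exact Finset.sum_congr rfl fun j _ => Complex.mul_conj' _
  rw [hrow, ← Complex.ofReal_mul, Complex.ofReal_re]
  exact le_mul_of_one_le_left (by positivity) (hr i)

end QuadraticPath

section TypeIDomain
variable {p q : ℕ}

lemma mul_conjTranspose_eq_diagonal_of_offDiag_eq_zero (hpq : p ≤ q) {W : Matrix (Fin p) (Fin q) ℂ}
    (hdiag : ∀ (i : Fin p) (j : Fin q), (i : ℕ) ≠ (j : ℕ) → W i j = 0) :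
    W * Wᴴ = diagonal (fun i => ((‖W i (Fin.castLE hpq i)‖ ^ 2 : ℝ) : ℂ)) := by
  ext i j
  rw [mul_apply, Finset.sum_eq_single (Fin.castLE hpq i)]
  · rcases eq_or_ne i j with rfl | hij
    · rw [diagonal_apply_eq, conjTranspose_apply, Complex.ofReal_pow]
      exact Complex.mul_conj' _
    · rw [diagonal_apply_ne _ hij, conjTranspose_apply,
        hdiag j _ (by simpa [Fin.val_eq_val] using hij.symm), star_zero, mul_zero]
  · intro k _ hk
    rw [hdiag i k (fun h => hk (Fin.ext h.symm)), zero_mul]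
  · simp

lemma one_sub_add_ofReal_smul_mul_conjTranspose {m k : Type*} [Fintype m] [DecidableEq m]
    [Fintype k] (W Y : Matrix m k ℂ) (s : ℝ) :
    1 - (W + (s : ℂ) • Y) * (W + (s : ℂ) • Y)ᴴ =
      (1 - W * Wᴴ) - (s : ℂ) • (Y * Wᴴ + (Y * Wᴴ)ᴴ) - (s : ℂ) ^ 2 • (Y * Yᴴ) := by
  have hs : star (s : ℂ) = s := Complex.conj_ofReal s
  simp only [conjTranspose_add, conjTranspose_smul, conjTranspose_mul, conjTranspose_conjTranspose,
    hs, Matrix.add_mul, Matrix.mul_add, Matrix.smul_mul, Matrix.mul_smul, smul_smul, sq, smul_add]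
  abel

theorem two_mul_sum_norm_sq_le_iteratedDeriv_negLogDetI (hpq : p ≤ q)
    {w₀ : Matrix (Fin p) (Fin q) ℂ}
    (hdiag : ∀ (i : Fin p) (j : Fin q), (i : ℕ) ≠ (j : ℕ) → w₀ i j = 0)
    (hd : ∀ i : Fin p, ‖w₀ i (Fin.castLE hpq i)‖ < 1) (Y : Matrix (Fin p) (Fin q) ℂ) :
    2 * ∑ i, ∑ j, ‖Y i j‖ ^ 2 ≤
      iteratedDeriv 2 (fun s : ℝ => negLogDetI p q (w₀ + (s : ℂ) • Y)) 0 := by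
  set r : Fin p → ℝ := fun i => 1 - ‖w₀ i (Fin.castLE hpq i)‖ ^ 2
  have hr_pos : ∀ i, 0 < r i := fun i => sub_pos.2 (pow_lt_one₀ (norm_nonneg _) (hd i) two_ne_zero)
  have hr_le : ∀ i, r i ≤ 1 := fun i => sub_le_self _ (sq_nonneg _)
  set D := diagonal (fun i => (r i : ℂ))
  have hD : 1 - w₀ * w₀ᴴ = D := by
    rw [mul_conjTranspose_eq_diagonal_of_offDiag_eq_zero hpq hdiag, ← diagonal_one, diagonal_sub]
    simp [r, D]
  have hDinv : D⁻¹ = diagonal (fun i => (((r i)⁻¹ : ℝ) : ℂ)) := by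
    refine inv_eq_left_inv ?_
    rw [diagonal_mul_diagonal, ← diagonal_one]
    congr 1
    ext i
    push_cast
    exact inv_mul_cancel₀ (Complex.ofReal_ne_zero.2 (hr_pos i).ne')
  have hdet : D.det = ((∏ i, r i : ℝ) : ℂ) := by simp [D]
  have hfun : (fun s : ℝ => negLogDetI p q (w₀ + (s : ℂ) • Y)) = fun s : ℝ =>
      -Real.log (D - (s : ℂ) • (Y * w₀ᴴ + (Y * w₀ᴴ)ᴴ) - (s : ℂ) ^ 2 • (Y * Yᴴ)).det.re := by
    ext s
    rw [negLogDetI, one_sub_add_ofReal_smul_mul_conjTranspose, hD]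
  rw [hfun, iteratedDeriv_two_neg_log_re_det_quadratic_path _ _ _
    (Finset.prod_pos fun i _ => hr_pos i) hdet]
  have hG := re_trace_diagonal_mul_mul_self_nonneg (fun i => (inv_pos.2 (hr_pos i)).le)
    (isHermitian_add_transpose_self (Y * w₀ᴴ))
  have hC := sum_norm_sq_le_re_trace_diagonal_mul_mul_conjTranspose
    (fun i => one_le_inv₀ (hr_pos i) |>.2 (hr_le i)) Y
  rw [← hDinv] at hG hC
  linarith [sq_nonneg (trace (D⁻¹ * (Y * w₀ᴴ + (Y * w₀ᴴ)ᴴ))).im]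

end TypeIDomain

theorem laplacian_negLogDet_ge_frobenius_general (p q : ℕ) (hpq : p ≤ q)
    (w₀ : Matrix (Fin p) (Fin q) ℂ)
    (hdiag : ∀ (i : Fin p) (j : Fin q), (i : ℕ) ≠ (j : ℕ) → w₀ i j = 0)
    (hd : ∀ i : Fin p, ‖w₀ i (Fin.castLE hpq i)‖ < 1)
    (X : Matrix (Fin p) (Fin q) ℂ) :
    4 * ∑ i, ∑ j, ‖X i j‖ ^ 2 ≤
      laplacianAt (fun t : ℂ => negLogDetI p q (w₀ + t • X)) := by
  have hX := two_mul_sum_norm_sq_le_iteratedDeriv_negLogDetI hpq hdiag hd X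
  have hIX := two_mul_sum_norm_sq_le_iteratedDeriv_negLogDetI hpq hdiag hd (Complex.I • X)
  simp only [Matrix.smul_apply, smul_eq_mul, norm_mul, Complex.norm_I, one_mul] at hIX
  simp only [laplacianAt, mul_smul]
  linarith

/-- At every diagonal point `w₀` of `D_{p,q}`, the complex Hessian of
`u(W) = −log det(I − W Wᴴ)` dominates the Frobenius Hermitian form: for every direction
`X`, the Laplacian at `0` of `t ↦ u(w₀ + t X)` is at least `4 Σ_{i,j} |X_{ij}|²`. -/
theorem laplacian_negLogDet_ge_frobenius (p q : ℕ) (hp : 1 ≤ p) (hpq : p ≤ q)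
    (w₀ : Matrix (Fin p) (Fin q) ℂ)
    (hdiag : ∀ (i : Fin p) (j : Fin q), (i : ℕ) ≠ (j : ℕ) → w₀ i j = 0)
    (hd : ∀ i : Fin p, ‖w₀ i (Fin.castLE hpq i)‖ < 1)
    (X : Matrix (Fin p) (Fin q) ℂ) :
    4 * ∑ i, ∑ j, ‖X i j‖ ^ 2 ≤
      laplacianAt (fun t : ℂ => negLogDetI p q (w₀ + t • X)) :=
  laplacian_negLogDet_ge_frobenius_general p q hpq w₀ hdiag hd X
end
end

section
/- Let 1 ≤ p ≤ q be integers and let w₁, …, w_p be complex numbers with |w_i| < 1 for all i. Then for all matrices A, B, Y ∈ M_{p×q}(ℂ): Σ_{i=1}^p Σ_{j=1}^q ( |A_{ij}|² + |B_{ij}|² − 2 Re(A_{ij} · conj(Y_{ij})) + |Y_{ij}|²/(1 − |w_i|²) ) − 2 Re( Σ_{i=1}^p Σ_{j=1}^p w_i w_j B_{ij} · conj(A_{ji}) ) ≥ 0. (This is the key algebraic inequality establishing plurisubharmonicity of the pullback log ψ(h(ξ), w) under a pluriharmonic section h in the type I case of the main theorem; it admits the sum-of-squares decomposition Σ_{i,j≤p}(|w_i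 B_{ij} − conj(w_j) A_{ji}|² + (1−|w_i|²)|B_{ij}|²) + Σ_{i≤p, p<j≤q}(|B_{ij}|² + |w_i|²|A_{ij}|²) + Σ_{i≤p, j≤q} |√(1−|w_i|²) A_{ij} − Y_{ij}/√(1−|w_i|²)|².) -/
open scoped ComplexConjugate

/-
By the AM-GM inequality `2 Re(u conj v) ≤ ‖u‖² + ‖v‖²` applied to `u = w_i B_{ij}` and
`v = conj(w_j) A_{ji}`, the cross term is at most `Σ_{i,j ≤ p} |w_i|² (|A_{ij}|² + |B_{ij}|²)`,
after exchanging `i` and `j` in the `A`-part. Enlarging the `j`-range to `q` only increases this,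
and each summand `|w_i|² (|A_{ij}|² + |B_{ij}|²)` is dominated by the corresponding diagonal term,
by the weighted AM-GM inequality `2 Re(A conj Y) ≤ (1 - |w_i|²)|A|² + |Y|² / (1 - |w_i|²)`.
-/

theorem Finset.sum_comp_embedding_le {ι κ M : Type*} [Fintype ι] [Fintype κ]
    [AddCommMonoid M] [Preorder M] [AddLeftMono M] (e : ι ↪ κ) {f : κ → M} (hf : ∀ k, 0 ≤ f k) :
    ∑ i, f (e i) ≤ ∑ k, f k := by
  rw [← Finset.sum_map]
  exact Finset.sum_le_univ_sum_of_nonneg hf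

namespace Complex

theorem two_mul_re_mul_conj_le (u v : ℂ) : 2 * (u * conj v).re ≤ ‖u‖ ^ 2 + ‖v‖ ^ 2 := by
  have := normSq_nonneg (u - v)
  rw [normSq_sub] at this
  rw [Complex.sq_norm, Complex.sq_norm]
  linarith

theorem two_mul_re_mul_conj_le_weighted (u v : ℂ) {s : ℝ} (hs : 0 < s) :
    2 * (u * conj v).re ≤ s * ‖u‖ ^ 2 + ‖v‖ ^ 2 / s := by
  have h := two_mul_re_mul_conj_le (s * u) v
  rw [mul_assoc, re_ofReal_mul, norm_mul, norm_real, Real.norm_of_nonneg hs.le] at h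
  refine le_of_mul_le_mul_left ?_ hs
  rw [mul_add, mul_div_cancel₀ _ hs.ne']
  linarith

theorem mul_add_sq_norm_le (a b y : ℂ) {t : ℝ} (ht : t < 1) :
    t * (‖a‖ ^ 2 + ‖b‖ ^ 2) ≤ ‖a‖ ^ 2 + ‖b‖ ^ 2 - 2 * (a * conj y).re + ‖y‖ ^ 2 / (1 - t) := by
  have hAY := two_mul_re_mul_conj_le_weighted a y (sub_pos.2 ht)
  nlinarith [sq_nonneg ‖b‖]

theorem two_mul_re_sum_mul_conj_transpose_le {n : Type*} [Fintype n] (w : n → ℂ)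
    (A B : Matrix n n ℂ) :
    2 * (∑ i, ∑ j, w i * w j * B i j * conj (A j i)).re ≤
      ∑ i, ∑ j, ‖w i‖ ^ 2 * (‖A i j‖ ^ 2 + ‖B i j‖ ^ 2) := by
  have entry (i j : n) : 2 * (w i * w j * B i j * conj (A j i)).re ≤
      ‖w i‖ ^ 2 * ‖B i j‖ ^ 2 + ‖w j‖ ^ 2 * ‖A j i‖ ^ 2 := by
    have h := two_mul_re_mul_conj_le (w i * B i j) (conj (w j) * A j i)
    rw [map_mul, conj_conj, norm_mul, norm_mul, norm_conj, mul_pow, mul_pow] at h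
    convert h using 3
    ring
  have swap : ∑ i, ∑ j, ‖w j‖ ^ 2 * ‖A j i‖ ^ 2 = ∑ i, ∑ j, ‖w i‖ ^ 2 * ‖A i j‖ ^ 2 :=
    Finset.sum_comm
  calc 2 * (∑ i, ∑ j, w i * w j * B i j * conj (A j i)).re
      = ∑ i, ∑ j, 2 * (w i * w j * B i j * conj (A j i)).re := by
        simp only [re_sum, Finset.mul_sum]
    _ ≤ ∑ i, ∑ j, (‖w i‖ ^ 2 * ‖B i j‖ ^ 2 + ‖w j‖ ^ 2 * ‖A j i‖ ^ 2) :=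
        Finset.sum_le_sum fun i _ => Finset.sum_le_sum fun j _ => entry i j
    _ = ∑ i, ∑ j, ‖w i‖ ^ 2 * (‖A i j‖ ^ 2 + ‖B i j‖ ^ 2) := by
        simp only [Finset.sum_add_distrib, swap, mul_add]
        ring

end Complex

theorem key_inequality_typeI_mainthm_general (p q : ℕ) (hpq : p ≤ q)
    (w : Fin p → ℂ) (hw : ∀ i, ‖w i‖ < 1)
    (A B Y : Matrix (Fin p) (Fin q) ℂ) :
    0 ≤ (∑ i : Fin p, ∑ j : Fin q,
          (‖A i j‖ ^ 2 + ‖B i j‖ ^ 2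
            - 2 * (A i j * conj (Y i j)).re
            + ‖Y i j‖ ^ 2 / (1 - ‖w i‖ ^ 2)))
        - 2 * (∑ i : Fin p, ∑ j : Fin p,
            w i * w j * B i (Fin.castLE hpq j) * conj (A j (Fin.castLE hpq i))).re := by
  have hw2 (i : Fin p) : ‖w i‖ ^ 2 < 1 := pow_lt_one₀ (norm_nonneg _) (hw i) two_ne_zero
  refine sub_nonneg.2 ?_
  calc _ ≤ ∑ i : Fin p, ∑ j : Fin p, ‖w i‖ ^ 2 *
          (‖A i (Fin.castLE hpq j)‖ ^ 2 + ‖B i (Fin.castLE hpq j)‖ ^ 2) :=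
        Complex.two_mul_re_sum_mul_conj_transpose_le w (A.submatrix id (Fin.castLE hpq))
          (B.submatrix id (Fin.castLE hpq))
    _ ≤ ∑ i : Fin p, ∑ j : Fin q, ‖w i‖ ^ 2 * (‖A i j‖ ^ 2 + ‖B i j‖ ^ 2) :=
        Finset.sum_le_sum fun i _ =>
          Finset.sum_comp_embedding_le (Fin.castLEEmb hpq)
            (f := fun j => ‖w i‖ ^ 2 * (‖A i j‖ ^ 2 + ‖B i j‖ ^ 2)) fun j => by positivity
    _ ≤ _ := Finset.sum_le_sum fun i _ => Finset.sum_le_sum fun j _ =>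
        Complex.mul_add_sq_norm_le (A i j) (B i j) (Y i j) (hw2 i)

/-- The key algebraic inequality (type I case of the main theorem): for `|w_i| < 1` and
matrices `A, B, Y ∈ M_{p×q}(ℂ)`,
`Σ_{i,j} (|A_{ij}|² + |B_{ij}|² − 2 Re(A_{ij} conj(Y_{ij})) + |Y_{ij}|²/(1−|w_i|²))`
`− 2 Re Σ_{i,j ≤ p} w_i w_j B_{ij} conj(A_{ji}) ≥ 0`. -/
theorem key_inequality_typeI_mainthm (p q : ℕ) (hp : 1 ≤ p) (hpq : p ≤ q)
    (w : Fin p → ℂ) (hw : ∀ i, ‖w i‖ < 1)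
    (A B Y : Matrix (Fin p) (Fin q) ℂ) :
    0 ≤ (∑ i : Fin p, ∑ j : Fin q,
          (‖A i j‖ ^ 2 + ‖B i j‖ ^ 2
            - 2 * (A i j * conj (Y i j)).re
            + ‖Y i j‖ ^ 2 / (1 - ‖w i‖ ^ 2)))
        - 2 * (∑ i : Fin p, ∑ j : Fin p,
            w i * w j * B i (Fin.castLE hpq j) * conj (A j (Fin.castLE hpq i))).re :=
  key_inequality_typeI_mainthm_general p q hpq w hw A B Y
end

section
/- Let 1 ≤ p ≤ q be integers, let r be a real number with r ≥ 2p, and let w₁, …, w_p be complex numbers with |w_i| < 1 for all i. Then for all matrices X, Y ∈ M_{p×q}(ℂ): Σ_{i=1}^p Σ_{j=1}^p ( |X_{ij}|² − 2 Re(X_{ij} · conj(Y_{ij})) + |Y_{ij}|²/((1 − |w_i|²)(1 − |w_j|²)) ) + Σ_{i=1}^p Σ_{j=p+1}^q ( |X_{ij}|² − 2 Re(X_{ij} · conj(Y_{ij})) + |Y_{ij}|²/(1 − |w_i|²) ) − (1/r) · | Σ_{i=1}^p ( conj(w_i) X_{ii} − conj(w_i) Y_{ii}/(1 − |w_i|²)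 ) |² ≥ 0. (This is the key inequality in the proof that −δ^{1/r} is a bounded plurisubharmonic exhaustion on the quotient Ω × Ω / Γ for the type I domain.) -/
open scoped ComplexConjugate

/-!
Put `a_i = 1 - |w_i|² ∈ (0, 1]`. Each summand has the form
`|x|² - 2 Re(x ȳ) + |y|²/c = |x - y|² + (1/c - 1)|y|²` with `c ∈ (0, 1]`, so all of them are
nonnegative, and the diagonal ones (`c = a_i²`) are at least `u_i² + v_i²` with
`u_i = |X_ii - Y_ii|`, `v_i = (1/a_i - 1)|Y_ii|`. On the other hand the `i`-th term of the
subtracted modulus is `w̄_i ((X_ii - Y_ii) - (1/a_i - 1) Y_ii)`, of modulus at most `u_i + v_i`,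
and Cauchy–Schwarz gives `(Σ (u_i + v_i))² ≤ 2p Σ (u_i² + v_i²) ≤ r Σ (u_i² + v_i²)`.
-/

section Summand

variable (x y : ℂ)

theorem norm_sq_sub_two_re_add_div_eq (c : ℝ) :
    ‖x‖ ^ 2 - 2 * (x * conj y).re + ‖y‖ ^ 2 / c = ‖x - y‖ ^ 2 + (1 / c - 1) * ‖y‖ ^ 2 := by
  rw [Complex.sq_norm, Complex.sq_norm, Complex.sq_norm, Complex.normSq_sub]
  ring

theorem one_div_sub_one_nonneg {c : ℝ} (hc0 : 0 < c) (hc1 : c ≤ 1) : 0 ≤ 1 / c - 1 :=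
  sub_nonneg.2 (one_le_one_div hc0 hc1)

theorem norm_sq_sub_two_re_add_div_nonneg {c : ℝ} (hc0 : 0 < c) (hc1 : c ≤ 1) :
    0 ≤ ‖x‖ ^ 2 - 2 * (x * conj y).re + ‖y‖ ^ 2 / c := by
  rw [norm_sq_sub_two_re_add_div_eq]
  have := one_div_sub_one_nonneg hc0 hc1
  positivity

theorem sq_norm_sub_add_sq_le_norm_sq_sub_two_re_add_div_mul_self {a : ℝ}
    (ha0 : 0 < a) (ha1 : a ≤ 1) :
    ‖x - y‖ ^ 2 + ((1 / a - 1) * ‖y‖) ^ 2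
      ≤ ‖x‖ ^ 2 - 2 * (x * conj y).re + ‖y‖ ^ 2 / (a * a) := by
  rw [norm_sq_sub_two_re_add_div_eq, mul_pow, add_le_add_iff_left]
  gcongr
  -- `(1/a - 1)² = (1/a² - 1) - 2(1/a - 1)`
  have := one_div_sub_one_nonneg ha0 ha1
  rw [← one_div_mul_one_div]
  nlinarith

theorem norm_mul_sub_mul_div_le {z : ℂ} (hz : ‖z‖ ≤ 1) (a : ℝ) :
    ‖z * x - z * y / a‖ ≤ ‖x - y‖ + |1 / a - 1| * ‖y‖ := by
  have hsplit : z * x - z * y / a = z * ((x - y) - ((1 / a - 1 : ℝ) : ℂ) * y) := by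
    push_cast
    ring
  calc ‖z * x - z * y / a‖ ≤ ‖(x - y) - ((1 / a - 1 : ℝ) : ℂ) * y‖ := by
        rw [hsplit, norm_mul]
        exact mul_le_of_le_one_left (norm_nonneg _) hz
    _ ≤ ‖x - y‖ + |1 / a - 1| * ‖y‖ := by
        refine (norm_sub_le _ _).trans_eq ?_
        rw [norm_mul, Complex.norm_real, Real.norm_eq_abs]

end Summand

theorem sq_sum_add_le_two_mul_card_mul {ι : Type*} (s : Finset ι) (u v : ι → ℝ) :
    (∑ i ∈ s, (u i + v i)) ^ 2 ≤ 2 * s.card * ∑ i ∈ s, (u i ^ 2 + v i ^ 2) := by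
  calc (∑ i ∈ s, (u i + v i)) ^ 2 ≤ s.card * ∑ i ∈ s, (u i + v i) ^ 2 :=
        sq_sum_le_card_mul_sum_sq
    _ ≤ s.card * ∑ i ∈ s, 2 * (u i ^ 2 + v i ^ 2) := by
        gcongr
        exact add_sq_le
    _ = 2 * s.card * ∑ i ∈ s, (u i ^ 2 + v i ^ 2) := by
        rw [← Finset.mul_sum]
        ring

theorem sum_diag_le_sum_norm_sq_sub_two_re_add_div_mul {ι : Type*} [Fintype ι]
    (x y : ι → ι → ℂ) {a : ι → ℝ} (ha0 : ∀ i, 0 < a i) (ha1 : ∀ i, a i ≤ 1) :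
    ∑ i, (‖x i i - y i i‖ ^ 2 + ((1 / a i - 1) * ‖y i i‖) ^ 2)
      ≤ ∑ i, ∑ j, (‖x i j‖ ^ 2 - 2 * (x i j * conj (y i j)).re + ‖y i j‖ ^ 2 / (a i * a j)) :=
  Finset.sum_le_sum fun i _ =>
    (sq_norm_sub_add_sq_le_norm_sq_sub_two_re_add_div_mul_self _ _ (ha0 i) (ha1 i)).trans <|
      Finset.single_le_sum (f := fun j => _ - _ + ‖y i j‖ ^ 2 / (a i * a j))
        (fun j _ => norm_sq_sub_two_re_add_div_nonneg _ _
          (mul_pos (ha0 i) (ha0 j)) (mul_le_one₀ (ha1 i) (ha0 j).le (ha1 j))) (Finset.mem_univ i)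

theorem one_sub_norm_sq_pos {w : ℂ} (hw : ‖w‖ < 1) : 0 < 1 - ‖w‖ ^ 2 := by
  have := norm_nonneg w
  nlinarith

theorem one_sub_norm_sq_le_one (w : ℂ) : 1 - ‖w‖ ^ 2 ≤ 1 :=
  sub_le_self _ (sq_nonneg _)

theorem key_inequality_hyperconvexity_typeI_general (p q : ℕ) (hpq : p ≤ q)
    (r : ℝ) (hr : 2 * p ≤ r)
    (w : Fin p → ℂ) (hw : ∀ i, ‖w i‖ < 1)
    (X Y : Matrix (Fin p) (Fin q) ℂ) :
    0 ≤ (∑ i : Fin p, ∑ j : Fin p,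
          (‖X i (Fin.castLE hpq j)‖ ^ 2
            - 2 * (X i (Fin.castLE hpq j) * conj (Y i (Fin.castLE hpq j))).re
            + ‖Y i (Fin.castLE hpq j)‖ ^ 2 /
                ((1 - ‖w i‖ ^ 2) * (1 - ‖w j‖ ^ 2))))
        + (∑ i : Fin p, ∑ j ∈ Finset.univ.filter (fun j : Fin q => p ≤ (j : ℕ)),
          (‖X i j‖ ^ 2 - 2 * (X i j * conj (Y i j)).re
            + ‖Y i j‖ ^ 2 / (1 - ‖w i‖ ^ 2)))
        - (1 / r) *
          ‖∑ i : Fin p,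
            (conj (w i) * X i (Fin.castLE hpq i)
              - conj (w i) * Y i (Fin.castLE hpq i) /
                  ((1 : ℂ) - (‖w i‖ : ℂ) ^ 2))‖ ^ 2 := by
  have ha0 i := one_sub_norm_sq_pos (hw i)
  have ha1 i := one_sub_norm_sq_le_one (w i)
  let u i := ‖X i (Fin.castLE hpq i) - Y i (Fin.castLE hpq i)‖
  let v i := (1 / (1 - ‖w i‖ ^ 2) - 1) * ‖Y i (Fin.castLE hpq i)‖
  have hS1 := sum_diag_le_sum_norm_sq_sub_two_re_add_div_mul
    (fun i j => X i (Fin.castLE hpq j)) (fun i j => Y i (Fin.castLE hpq j)) ha0 ha1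
  have hS2 : 0 ≤ ∑ i, ∑ j ∈ Finset.univ.filter (fun j : Fin q => p ≤ (j : ℕ)),
      (‖X i j‖ ^ 2 - 2 * (X i j * conj (Y i j)).re + ‖Y i j‖ ^ 2 / (1 - ‖w i‖ ^ 2)) :=
    Finset.sum_nonneg fun i _ => Finset.sum_nonneg fun j _ =>
      norm_sq_sub_two_re_add_div_nonneg _ _ (ha0 i) (ha1 i)
  have hM : ‖∑ i, (conj (w i) * X i (Fin.castLE hpq i)
      - conj (w i) * Y i (Fin.castLE hpq i) / ((1 : ℂ) - (‖w i‖ : ℂ) ^ 2))‖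
      ≤ ∑ i, (u i + v i) := by
    refine (norm_sum_le _ _).trans (Finset.sum_le_sum fun i _ => ?_)
    have hle := norm_mul_sub_mul_div_le (X i (Fin.castLE hpq i)) (Y i (Fin.castLE hpq i))
      ((Complex.norm_conj _).trans_le (hw i).le) (1 - ‖w i‖ ^ 2)
    rw [abs_of_nonneg (one_div_sub_one_nonneg (ha0 i) (ha1 i))] at hle
    exact_mod_cast hle
  have hM2 := (pow_le_pow_left₀ (norm_nonneg _) hM 2).trans
    (sq_sum_add_le_two_mul_card_mul Finset.univ u v)
  rw [Finset.card_univ, Fintype.card_fin] at hM2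
  have hD : 0 ≤ ∑ i, (u i ^ 2 + v i ^ 2) := by positivity
  have hquot := div_le_of_le_mul₀ ((by positivity : (0 : ℝ) ≤ 2 * p).trans hr) hD
    (hM2.trans (by rw [mul_comm]; gcongr))
  rw [one_div_mul_eq_div]
  linarith

/-- The key inequality in the proof that `−δ^{1/r}` is a bounded plurisubharmonic
exhaustion on `Ω × Ω / Γ` for the type I domain: for `r ≥ 2p`, `|w_i| < 1`, and
`X, Y ∈ M_{p×q}(ℂ)`,
`Σ_{i,j ≤ p} (|X_{ij}|² − 2Re(X_{ij} conj(Y_{ij})) + |Y_{ij}|²/((1−|w_i|²)(1−|w_j|²)))`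
`+ Σ_{i ≤ p, p < j ≤ q} (|X_{ij}|² − 2Re(X_{ij} conj(Y_{ij})) + |Y_{ij}|²/(1−|w_i|²))`
`− (1/r)|Σ_i (conj(w_i) X_{ii} − conj(w_i) Y_{ii}/(1−|w_i|²))|² ≥ 0`. -/
theorem key_inequality_hyperconvexity_typeI (p q : ℕ) (hp : 1 ≤ p) (hpq : p ≤ q)
    (r : ℝ) (hr : 2 * p ≤ r)
    (w : Fin p → ℂ) (hw : ∀ i, ‖w i‖ < 1)
    (X Y : Matrix (Fin p) (Fin q) ℂ) :
    0 ≤ (∑ i : Fin p, ∑ j : Fin p,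
          (‖X i (Fin.castLE hpq j)‖ ^ 2
            - 2 * (X i (Fin.castLE hpq j) * conj (Y i (Fin.castLE hpq j))).re
            + ‖Y i (Fin.castLE hpq j)‖ ^ 2 /
                ((1 - ‖w i‖ ^ 2) * (1 - ‖w j‖ ^ 2))))
        + (∑ i : Fin p, ∑ j ∈ Finset.univ.filter (fun j : Fin q => p ≤ (j : ℕ)),
          (‖X i j‖ ^ 2 - 2 * (X i j * conj (Y i j)).re
            + ‖Y i j‖ ^ 2 / (1 - ‖w i‖ ^ 2)))
        - (1 / r) *
          ‖∑ i : Fin p,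
            (conj (w i) * X i (Fin.castLE hpq i)
              - conj (w i) * Y i (Fin.castLE hpq i) /
                  ((1 : ℂ) - (‖w i‖ : ℂ) ^ 2))‖ ^ 2 :=
  key_inequality_hyperconvexity_typeI_general p q hpq r hr w hw X Y
end

section
/- Let 1 ≤ p ≤ q be integers, let r be a real number with r ≥ 2p, and let w₁, …, w_p be complex numbers with |w_i| < 1 for all i. Then for all matrices X, Y ∈ M_{p×q}(ℂ) with (X,Y) ≠ (0,0): Σ_{j=1}^p Σ_{k=1}^p ( |X_{jk}|² + |Y_{jk}|²/((1 − |w_k|²)(1 − |w_j|²)) ) + Σ_{j=1}^p Σ_{k=p+1}^q ( |X_{jk}|² + |Y_{jk}|²/(1 − |w_j|²) ) − (1/r) · | Σ_{j=1}^p w_j X_{jj} − Σ_{j=1}^p conj(w_j) Y_{jj}/(1 − |w_j|²) |² > 0. (This is the key strict inequality in the proof that −δ̄^{1/r} is a bounded strictly plurisubharmonic exhaustion for the conjugate-twisted quotient Ω × Ω / Γ̄ in the type I case.) -/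
/-!
For `a_j = w_j X_jj` and `b_j = conj(w_j) Y_jj / (1 - |w_j|²)`, Cauchy–Schwarz gives
`|Σ a_j - Σ b_j|² ≤ 2p Σ (|a_j|² + |b_j|²) = 2p Σ |w_j|² c_j`, where `c_j` is the diagonal
(`k = j`) term of the first double sum. As `r ≥ 2p`, the subtracted term is therefore at most
`m Σ c_j ≤ m F`, with `m = max |w_j|² < 1` and `F` the sum of the two double sums, a positive
definite quadratic form in `(X, Y)` because all weights `1 - |w_j|²` are positive.
-/

open scoped ComplexConjugate

noncomputable section

open Finset

section NormBounds

variable {E ι : Type*} [SeminormedAddCommGroup E]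

theorem norm_sub_sq_le_two_mul (a b : E) : ‖a - b‖ ^ 2 ≤ 2 * (‖a‖ ^ 2 + ‖b‖ ^ 2) :=
  (pow_le_pow_left₀ (norm_nonneg _) (norm_sub_le a b) 2).trans add_sq_le

theorem norm_sum_sub_sum_sq_le (s : Finset ι) (a b : ι → E) :
    ‖∑ i ∈ s, a i - ∑ i ∈ s, b i‖ ^ 2 ≤ 2 * #s * ∑ i ∈ s, (‖a i‖ ^ 2 + ‖b i‖ ^ 2) := by
  rw [← sum_sub_distrib]
  calc ‖∑ i ∈ s, (a i - b i)‖ ^ 2 ≤ (∑ i ∈ s, ‖a i - b i‖) ^ 2 :=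
        pow_le_pow_left₀ (norm_nonneg _) (norm_sum_le _ _) 2
    _ ≤ #s * ∑ i ∈ s, ‖a i - b i‖ ^ 2 := sq_sum_le_card_mul_sum_sq
    _ ≤ #s * ∑ i ∈ s, 2 * (‖a i‖ ^ 2 + ‖b i‖ ^ 2) := by
        gcongr with i; exact norm_sub_sq_le_two_mul _ _
    _ = 2 * #s * ∑ i ∈ s, (‖a i‖ ^ 2 + ‖b i‖ ^ 2) := by rw [← mul_sum]; ring

end NormBounds

theorem Finite.exists_mem_Ico_forall_le {ι α : Type*} [Finite ι] [LinearOrder α] {f : ι → α}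
    {a b : α} (hb : b < a) (hf : ∀ i, f i < a) : ∃ m ∈ Set.Ico b a, ∀ i, f i ≤ m := by
  cases isEmpty_or_nonempty ι
  · exact ⟨b, ⟨le_rfl, hb⟩, isEmptyElim⟩
  · obtain ⟨i₀, hi₀⟩ := Finite.exists_max f
    exact ⟨max b (f i₀), ⟨le_max_left _ _, max_lt hb (hf i₀)⟩,
      fun i => (hi₀ i).trans (le_max_right _ _)⟩

theorem Finset.sum_diag_le_sum_sum {ι M : Type*} [Fintype ι] [AddCommMonoid M] [PartialOrder M]
    [IsOrderedAddMonoid M] {f : ι → ι → M} (hf : ∀ j k, 0 ≤ f j k) :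
    ∑ j, f j j ≤ ∑ j, ∑ k, f j k :=
  sum_le_sum fun j _ => single_le_sum (fun k _ => hf j k) (mem_univ j)

theorem Finset.sum_sum_pos {ι κ : Type*} {s : Finset ι} {t : Finset κ} {f : ι → κ → ℝ}
    (hf : ∀ j ∈ s, ∀ k ∈ t, 0 ≤ f j k) {j : ι} (hj : j ∈ s) {k : κ} (hk : k ∈ t)
    (hpos : 0 < f j k) : 0 < ∑ j ∈ s, ∑ k ∈ t, f j k :=
  sum_pos' (fun j hj => sum_nonneg (hf j hj)) ⟨j, hj, sum_pos' (hf j hj) ⟨k, hk, hpos⟩⟩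

section WeightedSq

variable {E : Type*} [NormedAddCommGroup E]

theorem sq_norm_add_sq_norm_div_nonneg (x y : E) {μ : ℝ} (hμ : 0 ≤ μ) :
    0 ≤ ‖x‖ ^ 2 + ‖y‖ ^ 2 / μ := by
  positivity

theorem sq_norm_add_sq_norm_div_pos {x y : E} {μ : ℝ} (hμ : 0 < μ) (hxy : x ≠ 0 ∨ y ≠ 0) :
    0 < ‖x‖ ^ 2 + ‖y‖ ^ 2 / μ := by
  rcases hxy with hx | hy
  · have := norm_pos_iff.2 hx
    positivity
  · have := norm_pos_iff.2 hy
    positivity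

end WeightedSq

theorem Complex.norm_mul_sq_add_norm_conj_mul_div_sq (z x y : ℂ) :
    ‖z * x‖ ^ 2 + ‖conj z * y / ((1 : ℂ) - ((‖z‖ : ℝ) : ℂ) ^ 2)‖ ^ 2
      = ‖z‖ ^ 2 * (‖x‖ ^ 2 + ‖y‖ ^ 2 / ((1 - ‖z‖ ^ 2) * (1 - ‖z‖ ^ 2))) := by
  have hden : (1 : ℂ) - ((‖z‖ : ℝ) : ℂ) ^ 2 = ((1 - ‖z‖ ^ 2 : ℝ) : ℂ) := by push_cast; ring
  rw [hden, norm_div, norm_mul, norm_mul, Complex.norm_conj, Complex.norm_real, Real.norm_eq_abs,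
    div_pow, mul_pow, mul_pow, sq_abs]
  ring

theorem Complex.norm_sum_mul_sub_sum_conj_mul_div_sq_le {ι : Type*} (s : Finset ι)
    (w x y : ι → ℂ) :
    ‖∑ i ∈ s, w i * x i - ∑ i ∈ s, conj (w i) * y i / ((1 : ℂ) - ((‖w i‖ : ℝ) : ℂ) ^ 2)‖ ^ 2
      ≤ 2 * #s * ∑ i ∈ s,
        ‖w i‖ ^ 2 * (‖x i‖ ^ 2 + ‖y i‖ ^ 2 / ((1 - ‖w i‖ ^ 2) * (1 - ‖w i‖ ^ 2))) := by
  refine (norm_sum_sub_sum_sq_le s _ _).trans_eq ?_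
  simp only [Complex.norm_mul_sq_add_norm_conj_mul_div_sq]

theorem Matrix.exists_ne_zero_or_ne_zero_of_prod_ne_zero {m n R : Type*} [Zero R]
    {X Y : Matrix m n R} (hXY : (X, Y) ≠ (0, 0)) : ∃ j k, X j k ≠ 0 ∨ Y j k ≠ 0 := by
  by_contra! h
  exact hXY (Prod.ext (Matrix.ext fun j k => (h j k).1) (Matrix.ext fun j k => (h j k).2))

section TypeIForm

variable {p q : ℕ} (hpq : p ≤ q) (X Y : Matrix (Fin p) (Fin q) ℂ) (d : Fin p → ℝ)

/-- The two double sums of the statement, with `1 - ‖w j‖ ^ 2` abstracted to `d j`. -/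
def typeIForm : ℝ :=
  (∑ j, ∑ k : Fin p,
      (‖X j (Fin.castLE hpq k)‖ ^ 2 + ‖Y j (Fin.castLE hpq k)‖ ^ 2 / (d k * d j)))
    + ∑ j, ∑ k ∈ univ.filter (fun k : Fin q => p ≤ (k : ℕ)), (‖X j k‖ ^ 2 + ‖Y j k‖ ^ 2 / d j)

variable {hpq X Y d}

theorem sum_diag_le_typeIForm (hd : ∀ j, 0 ≤ d j) :
    ∑ j, (‖X j (Fin.castLE hpq j)‖ ^ 2 + ‖Y j (Fin.castLE hpq j)‖ ^ 2 / (d j * d j))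
      ≤ typeIForm hpq X Y d :=
  le_add_of_le_of_nonneg
    (sum_diag_le_sum_sum fun j k => sq_norm_add_sq_norm_div_nonneg
      (X j (Fin.castLE hpq k)) (Y j (Fin.castLE hpq k)) (mul_nonneg (hd k) (hd j)))
    (sum_nonneg fun j _ => sum_nonneg fun _ _ => sq_norm_add_sq_norm_div_nonneg _ _ (hd j))

theorem typeIForm_pos (hd : ∀ j, 0 < d j) (hXY : (X, Y) ≠ (0, 0)) : 0 < typeIForm hpq X Y d := by
  have hS₁ : ∀ j ∈ univ, ∀ k ∈ univ, 0 ≤ ‖X j (Fin.castLE hpq k)‖ ^ 2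
      + ‖Y j (Fin.castLE hpq k)‖ ^ 2 / (d k * d j) := fun j _ k _ =>
    sq_norm_add_sq_norm_div_nonneg _ _ (mul_pos (hd k) (hd j)).le
  have hS₂ : ∀ j ∈ univ, ∀ k ∈ univ.filter (fun k : Fin q => p ≤ (k : ℕ)),
      0 ≤ ‖X j k‖ ^ 2 + ‖Y j k‖ ^ 2 / d j := fun j _ k _ =>
    sq_norm_add_sq_norm_div_nonneg _ _ (hd j).le
  obtain ⟨j, k, hjk⟩ := Matrix.exists_ne_zero_or_ne_zero_of_prod_ne_zero hXY
  by_cases hk : (k : ℕ) < p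
  · have hcast : Fin.castLE hpq ⟨k, hk⟩ = k := Fin.ext rfl
    have hpos := sum_sum_pos hS₁ (mem_univ j) (mem_univ ⟨k, hk⟩)
      (sq_norm_add_sq_norm_div_pos (mul_pos (hd _) (hd j)) (by rwa [hcast]))
    exact add_pos_of_pos_of_nonneg hpos (sum_nonneg fun j hj => sum_nonneg (hS₂ j hj))
  · have hpos := sum_sum_pos hS₂ (mem_univ j) (mem_filter.2 ⟨mem_univ k, not_lt.1 hk⟩)
      (sq_norm_add_sq_norm_div_pos (hd j) hjk)
    exact add_pos_of_nonneg_of_pos (sum_nonneg fun j hj => sum_nonneg (hS₁ j hj)) hpos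

end TypeIForm

theorem key_strict_inequality_steinness_typeI_general (p q : ℕ) (hpq : p ≤ q)
    (r : ℝ) (hr : 2 * p ≤ r)
    (w : Fin p → ℂ) (hw : ∀ i, ‖w i‖ < 1)
    (X Y : Matrix (Fin p) (Fin q) ℂ) (hXY : (X, Y) ≠ (0, 0)) :
    0 < (∑ j : Fin p, ∑ k : Fin p,
          (‖X j (Fin.castLE hpq k)‖ ^ 2
            + ‖Y j (Fin.castLE hpq k)‖ ^ 2 /
                ((1 - ‖w k‖ ^ 2) * (1 - ‖w j‖ ^ 2))))
        + (∑ j : Fin p, ∑ k ∈ Finset.univ.filter (fun k : Fin q => p ≤ (k : ℕ)),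
          (‖X j k‖ ^ 2
            + ‖Y j k‖ ^ 2 / (1 - ‖w j‖ ^ 2)))
        - (1 / r) *
          ‖(∑ j : Fin p, w j * X j (Fin.castLE hpq j))
            - ∑ j : Fin p, conj (w j) * Y j (Fin.castLE hpq j) /
                ((1 : ℂ) - ((‖w j‖ : ℝ) : ℂ) ^ 2)‖ ^ 2 := by
  have hw₂ : ∀ j, ‖w j‖ ^ 2 < 1 := fun j => pow_lt_one₀ (norm_nonneg _) (hw j) two_ne_zero
  have hd : ∀ j, 0 < 1 - ‖w j‖ ^ 2 := fun j => sub_pos.2 (hw₂ j)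
  obtain ⟨m, ⟨hm₀, hm₁⟩, hwm⟩ := Finite.exists_mem_Ico_forall_le zero_lt_one hw₂
  set c : Fin p → ℝ := fun j => ‖X j (Fin.castLE hpq j)‖ ^ 2
    + ‖Y j (Fin.castLE hpq j)‖ ^ 2 / ((1 - ‖w j‖ ^ 2) * (1 - ‖w j‖ ^ 2))
  have hc : ∀ j, 0 ≤ c j := fun j => sq_norm_add_sq_norm_div_nonneg _ _ (mul_pos (hd j) (hd j)).le
  have hwc : 0 ≤ ∑ j, ‖w j‖ ^ 2 * c j := sum_nonneg fun j _ => mul_nonneg (sq_nonneg _) (hc j)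
  set F := typeIForm hpq X Y (fun j => 1 - ‖w j‖ ^ 2)
  show 0 < F - _
  rw [sub_pos, one_div_mul_eq_div]
  calc _ / r ≤ ∑ j, ‖w j‖ ^ 2 * c j := by
        refine div_le_of_le_mul₀ (le_trans (by positivity) hr) hwc ?_
        refine (Complex.norm_sum_mul_sub_sum_conj_mul_div_sq_le univ w _ _).trans ?_
        rw [card_univ, Fintype.card_fin, mul_comm _ r]
        exact mul_le_mul_of_nonneg_right hr hwc
    _ ≤ m * ∑ j, c j := by
        rw [mul_sum]
        exact sum_le_sum fun j _ => mul_le_mul_of_nonneg_right (hwm j) (hc j)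
    _ ≤ m * F := mul_le_mul_of_nonneg_left (sum_diag_le_typeIForm fun j => (hd j).le) hm₀
    _ < F := mul_lt_of_lt_one_left (typeIForm_pos hd hXY) hm₁

/-- The key strict inequality in the proof that `−δ̄^{1/r}` is a bounded strictly
plurisubharmonic exhaustion for the conjugate-twisted quotient (type I case): for
`r ≥ 2p`, `|w_j| < 1` and `(X,Y) ≠ (0,0)`,
`Σ_{j,k ≤ p} (|X_{jk}|² + |Y_{jk}|²/((1−|w_k|²)(1−|w_j|²)))`
`+ Σ_{j ≤ p, p < k ≤ q} (|X_{jk}|² + |Y_{jk}|²/(1−|w_j|²))`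
`− (1/r)|Σ_j w_j X_{jj} − Σ_j conj(w_j) Y_{jj}/(1−|w_j|²)|² > 0`. -/
theorem key_strict_inequality_steinness_typeI (p q : ℕ) (hp : 1 ≤ p) (hpq : p ≤ q)
    (r : ℝ) (hr : 2 * p ≤ r)
    (w : Fin p → ℂ) (hw : ∀ i, ‖w i‖ < 1)
    (X Y : Matrix (Fin p) (Fin q) ℂ) (hXY : (X, Y) ≠ (0, 0)) :
    0 < (∑ j : Fin p, ∑ k : Fin p,
          (‖X j (Fin.castLE hpq k)‖ ^ 2
            + ‖Y j (Fin.castLE hpq k)‖ ^ 2 /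
                ((1 - ‖w k‖ ^ 2) * (1 - ‖w j‖ ^ 2))))
        + (∑ j : Fin p, ∑ k ∈ Finset.univ.filter (fun k : Fin q => p ≤ (k : ℕ)),
          (‖X j k‖ ^ 2
            + ‖Y j k‖ ^ 2 / (1 - ‖w j‖ ^ 2)))
        - (1 / r) *
          ‖(∑ j : Fin p, w j * X j (Fin.castLE hpq j))
            - ∑ j : Fin p, conj (w j) * Y j (Fin.castLE hpq j) /
                ((1 : ℂ) - ((‖w j‖ : ℝ) : ℂ) ^ 2)‖ ^ 2 :=
  key_strict_inequality_steinness_typeI_general p q hpq r hr w hw X Y hXY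
end
end

section
/- Let n ≥ 1 and let 𝔹^n := {z ∈ ℂ^n : ‖z‖ < 1} be the unit ball. For all z, w ∈ 𝔹^n one has 1 − Σ_{j=1}^n z_j w_j ≠ 0, and the function (z,w) ↦ −( (1 − ‖z‖²)(1 − ‖w‖²)/|1 − Σ_{j=1}^n z_j w_j|² )^{1/2} is strictly plurisubharmonic on 𝔹^n × 𝔹^n and takes values in [−1, 0). (This is the strictly plurisubharmonic bounded function underlying the Steinness result for the conjugate-twisted ball bundle 𝔹^n × 𝔹^n/Γ̄.) -/
/-!
On a real line `s ↦ (z, w) + s • (ζ, ω)` the function `δ̄` is `N₁ N₂ / |P|²` with `N₁`, `N₂` real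
quadratics in `s` and `P(s) = 1 - (z + sζ)·(w + sω)` a complex quadratic, so the second derivative
of `-δ̄^{1/2}` at `s = 0` is read off from second-order jets. The Laplacian along the complex line
is the sum of the directions `(ζ, ω)` and `i (ζ, ω)`, and in this sum the contribution of the
harmonic function `log |P|²` cancels. Writing `A = 1 - ‖z‖²`, `A' = 1 - ‖w‖²` and
`⟨ζ, z⟩ = Σ ζ_j z̄_j`, the Laplacian is `δ̄^{1/2}` times
`2 (‖ζ‖²/A + |⟨ζ, z⟩|²/A² + ‖ω‖²/A' + |⟨ω, w⟩|²/A'²) - |X + Y|²`, where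
`X = ⟨ζ, z⟩/A - ζ·w/(1 - z·w)` and `Y` is its analogue for `ω`. With `μ = ζ·w/(1 - z·w)` and
`η = ζ + μ z` one has `η·w = μ`, so Cauchy–Schwarz `|μ|² ≤ ‖η‖² ‖w‖²` makes
`‖ζ‖²/A + |⟨ζ, z⟩|²/A² - |X|² = (‖η‖² - |μ|²)/A` positive as soon as `ζ ≠ 0`, and
`|X + Y|² ≤ 2|X|² + 2|Y|²` concludes. The bound `δ̄ ≤ 1` is
`(1 - a²)(1 - b²) ≤ (1 - ab)² ≤ |1 - z·w|²` for `a = ‖z‖`, `b = ‖w‖`.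
-/

open scoped ComplexConjugate

noncomputable section

/-- The unit ball `𝔹^n ⊆ ℂ^n`. -/
def unitBall (n : ℕ) : Set (Fin n → ℂ) :=
  {z | ∑ j, ‖z j‖ ^ 2 < 1}

/-- `δ̄(z,w) = (1 − ‖z‖²)(1 − ‖w‖²)/|1 − Σ_j z_j w_j|²`, with the bilinear
(non-conjugated) pairing. -/
def deltaBarBall (n : ℕ) (z w : Fin n → ℂ) : ℝ :=
  ((1 - ∑ j, ‖z j‖ ^ 2) * (1 - ∑ j, ‖w j‖ ^ 2)) /
    ‖1 - ∑ j, z j * w j‖ ^ 2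

/-- Strict plurisubharmonicity on a set in a complex vector space. -/
def StrictPSHOn {E : Type*} [AddCommGroup E] [Module ℂ E] (u : E → ℝ) (U : Set E) : Prop :=
  ∀ a ∈ U, ∀ v : E, v ≠ 0 → 0 < laplacianAt fun t : ℂ => u (a + t • v)

open Filter Topology Finset Complex

def HasTwoJetAt (f : ℝ → ℝ) (x c₀ c₁ c₂ : ℝ) : Prop :=
  f x = c₀ ∧ ∃ f' : ℝ → ℝ, (∀ᶠ y in 𝓝 x, HasDerivAt f (f' y) y) ∧ f' x = c₁ ∧ HasDerivAt f' c₂ x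

namespace HasTwoJetAt

variable {f g : ℝ → ℝ} {x c₀ c₁ c₂ d₀ d₁ d₂ : ℝ}

theorem iteratedDeriv_two_eq (hf : HasTwoJetAt f x c₀ c₁ c₂) : iteratedDeriv 2 f x = c₂ := by
  obtain ⟨-, f', hf', -, hf''⟩ := hf
  have hderiv : deriv f =ᶠ[𝓝 x] f' := hf'.mono fun y hy => hy.deriv
  rw [iteratedDeriv_succ, iteratedDeriv_one, hderiv.deriv_eq, hf''.deriv]

theorem add (hf : HasTwoJetAt f x c₀ c₁ c₂) (hg : HasTwoJetAt g x d₀ d₁ d₂) :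
    HasTwoJetAt (fun s => f s + g s) x (c₀ + d₀) (c₁ + d₁) (c₂ + d₂) := by
  obtain ⟨rfl, f', hf', rfl, hf''⟩ := hf
  obtain ⟨rfl, g', hg', rfl, hg''⟩ := hg
  exact ⟨rfl, fun s => f' s + g' s, (hf'.and hg').mono fun s hs => hs.1.add hs.2, rfl,
    hf''.add hg''⟩

theorem mul (hf : HasTwoJetAt f x c₀ c₁ c₂) (hg : HasTwoJetAt g x d₀ d₁ d₂) :
    HasTwoJetAt (fun s => f s * g s) x (c₀ * d₀) (c₁ * d₀ + c₀ * d₁)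
      (c₂ * d₀ + 2 * c₁ * d₁ + c₀ * d₂) := by
  obtain ⟨rfl, f', hf', rfl, hf''⟩ := hf
  obtain ⟨rfl, g', hg', rfl, hg''⟩ := hg
  refine ⟨rfl, fun s => f' s * g s + f s * g' s,
    (hf'.and hg').mono fun s hs => hs.1.mul hs.2, rfl, ?_⟩
  exact ((hf''.mul hg'.self_of_nhds).add (hf'.self_of_nhds.mul hg'')).congr_deriv (by ring)

theorem inv (hf : HasTwoJetAt f x c₀ c₁ c₂) (hc₀ : c₀ ≠ 0) :
    HasTwoJetAt (fun s => (f s)⁻¹) x c₀⁻¹ (-c₁ / c₀ ^ 2) ((2 * c₁ ^ 2 - c₀ * c₂) / c₀ ^ 3) := by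
  obtain ⟨rfl, f', hf', rfl, hf''⟩ := hf
  have hne : ∀ᶠ s in 𝓝 x, f s ≠ 0 := hf'.self_of_nhds.continuousAt.eventually_ne hc₀
  refine ⟨rfl, fun s => -f' s / f s ^ 2, (hf'.and hne).mono fun s hs => hs.1.inv hs.2, rfl, ?_⟩
  refine (hf''.neg.div (hf'.self_of_nhds.pow 2) (pow_ne_zero 2 hc₀)).congr_deriv ?_
  simp only [Pi.pow_apply, Pi.neg_apply]
  field_simp
  ring

theorem sqrt (hf : HasTwoJetAt f x c₀ c₁ c₂) (hc₀ : 0 < c₀) :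
    HasTwoJetAt (fun s => √(f s)) x √c₀ (√c₀ * (c₁ / (2 * c₀)))
      (√c₀ * ((2 * c₀ * c₂ - c₁ ^ 2) / (4 * c₀ ^ 2))) := by
  obtain ⟨rfl, f', hf', rfl, hf''⟩ := hf
  have hne : ∀ᶠ s in 𝓝 x, f s ≠ 0 := hf'.self_of_nhds.continuousAt.eventually_ne hc₀.ne'
  have hsq : √(f x) ^ 2 = f x := Real.sq_sqrt hc₀.le
  refine ⟨rfl, fun s => f' s / (2 * √(f s)), (hf'.and hne).mono fun s hs => hs.1.sqrt hs.2,
    by field_simp; rw [hsq], ?_⟩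
  refine (hf''.div ((hf'.self_of_nhds.sqrt hc₀.ne').const_mul 2) (by positivity)).congr_deriv ?_
  field_simp
  rw [show √(f x) ^ 4 = (√(f x) ^ 2) ^ 2 by ring, hsq]
  ring

theorem neg (hf : HasTwoJetAt f x c₀ c₁ c₂) : HasTwoJetAt (fun s => -f s) x (-c₀) (-c₁) (-c₂) := by
  obtain ⟨rfl, f', hf', rfl, hf''⟩ := hf
  exact ⟨rfl, fun s => -f' s, hf'.mono fun s hs => hs.neg, rfl, hf''.neg⟩

end HasTwoJetAt

theorem hasTwoJetAt_quadratic (a b c : ℝ) :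
    HasTwoJetAt (fun s => a + b * s + c * s ^ 2) 0 a b (2 * c) := by
  refine ⟨by simp, fun s => b + 2 * c * s, .of_forall fun s => ?_, by simp, ?_⟩
  · exact ((((hasDerivAt_id s).const_mul b).const_add a).add
      ((hasDerivAt_pow 2 s).const_mul c)).congr_deriv (by ring)
  · exact (((hasDerivAt_id (0 : ℝ)).const_mul (2 * c)).const_add b).congr_deriv (by simp)

theorem hasTwoJetAt_normSq_quadratic (p q r : ℂ) :
    HasTwoJetAt (fun s : ℝ => normSq (p + q * s + r * s ^ 2)) 0 (normSq p)
      (2 * (p * conj q).re) (2 * (normSq q + 2 * (p * conj r).re)) := by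
  have hre := hasTwoJetAt_quadratic p.re q.re r.re
  have him := hasTwoJetAt_quadratic p.im q.im r.im
  convert (hre.mul hre).add (him.mul him) using 1
  · funext s
    simp [normSq_apply, ← ofReal_pow]
  · simp [normSq_apply]
  · simp only [mul_re, conj_re, conj_im]; ring
  · simp only [normSq_apply, mul_re, conj_re, conj_im]; ring

theorem iteratedDeriv_two_neg_sqrt_quadratic_mul_div_normSq {A A' β β' C C' : ℝ} {p q r : ℂ}
    (hA : 0 < A) (hA' : 0 < A') (hp : p ≠ 0) :
    iteratedDeriv 2 (fun s : ℝ => -(((A - 2 * β * s - C * s ^ 2) * (A' - 2 * β' * s - C' * s ^ 2)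
        / normSq (p + q * s + r * s ^ 2)) ^ (1 / 2 : ℝ))) 0 =
      √(A * A' / normSq p) * (C / A + 2 * (β / A) ^ 2 + C' / A' + 2 * (β' / A') ^ 2
        + (2 * (r / p) - (q / p) ^ 2).re - (β / A + β' / A' + (q / p).re) ^ 2) := by
  have hN : HasTwoJetAt (fun s => A - 2 * β * s - C * s ^ 2) 0 A (-2 * β) (-2 * C) := by
    convert hasTwoJetAt_quadratic A (-2 * β) (-C) using 1
    · funext s; ring
    · ring
  have hN' : HasTwoJetAt (fun s => A' - 2 * β' * s - C' * s ^ 2) 0 A' (-2 * β') (-2 * C') := by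
    convert hasTwoJetAt_quadratic A' (-2 * β') (-C') using 1
    · funext s; ring
    · ring
  have hD := hasTwoJetAt_normSq_quadratic p q r
  have hD0 : 0 < normSq p := normSq_pos.2 hp
  have hg := ((hN.mul hN').mul (hD.inv hD0.ne')).sqrt (by positivity) |>.neg
  simp only [← div_eq_mul_inv, ← Real.sqrt_eq_rpow] at hg ⊢
  rw [hg.iteratedDeriv_two_eq, neg_mul_eq_mul_neg]
  congr 1
  set κ := q / p
  set ρ := r / p
  have hq : q = κ * p := by simp [κ, hp]
  have hr : r = ρ * p := by simp [ρ, hp]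
  have hκ2 : (κ ^ 2).re = 2 * κ.re ^ 2 - normSq κ := by
    rw [pow_two, mul_re, normSq_apply]; ring
  have hconj : ∀ μ : ℂ, (p * conj (μ * p)).re = normSq p * μ.re := by
    intro μ
    simp only [mul_re, mul_im, conj_re, conj_im, normSq_apply]
    ring
  have h2ρ : (2 * ρ).re = 2 * ρ.re := by simp
  rw [hq, hr, hconj, hconj, normSq_mul, sub_re, h2ρ, hκ2]
  field_simp
  ring

section Sums

variable {ι : Type*} [Fintype ι]

theorem norm_dotProduct_le (z w : ι → ℂ) :
    ‖z ⬝ᵥ w‖ ≤ √(∑ j, ‖z j‖ ^ 2) * √(∑ j, ‖w j‖ ^ 2) :=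
  (norm_sum_le _ _).trans <| by
    simpa only [norm_mul] using Real.sum_mul_le_sqrt_mul_sqrt univ (‖z ·‖) (‖w ·‖)

theorem normSq_dotProduct_le (z w : ι → ℂ) :
    normSq (z ⬝ᵥ w) ≤ (∑ j, ‖z j‖ ^ 2) * ∑ j, ‖w j‖ ^ 2 := by
  rw [← Complex.sq_norm, ← Real.sq_sqrt (sum_nonneg fun j _ => sq_nonneg ‖z j‖),
    ← Real.sq_sqrt (sum_nonneg fun j _ => sq_nonneg ‖w j‖), ← mul_pow]
  exact pow_le_pow_left₀ (norm_nonneg _) (norm_dotProduct_le z w) 2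

theorem sum_norm_sq_pos {x : ι → ℂ} (hx : x ≠ 0) : 0 < ∑ j, ‖x j‖ ^ 2 := by
  obtain ⟨j, hj⟩ := Function.ne_iff.1 hx
  exact sum_pos' (fun _ _ => sq_nonneg _) ⟨j, mem_univ _, pow_pos (norm_pos_iff.2 hj) 2⟩

theorem sum_norm_add_smul_sq (x y : ι → ℂ) (c : ℂ) :
    ∑ j, ‖(x + c • y) j‖ ^ 2
      = ∑ j, ‖x j‖ ^ 2 + 2 * (c * (y ⬝ᵥ star x)).re + normSq c * ∑ j, ‖y j‖ ^ 2 := by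
  have hterm : ∀ j, ‖(x + c • y) j‖ ^ 2
      = ‖x j‖ ^ 2 + 2 * (c * (y j * star (x j))).re + normSq c * ‖y j‖ ^ 2 := by
    intro j
    simp only [Pi.add_apply, Pi.smul_apply, smul_eq_mul, Complex.sq_norm, normSq_add, map_mul]
    simp only [RCLike.star_def, mul_re, mul_im, conj_re, conj_im]
    ring
  simp only [hterm, sum_add_distrib, dotProduct, re_sum, mul_sum]
  rfl

end Sums

variable {n : ℕ}

theorem sqrt_sum_sq_lt_one {z : Fin n → ℂ} (hz : z ∈ unitBall n) : √(∑ j, ‖z j‖ ^ 2) < 1 :=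
  (Real.sqrt_lt' one_pos).2 (by rw [one_pow]; exact hz)

theorem norm_dotProduct_lt_one {z w : Fin n → ℂ} (hz : z ∈ unitBall n) (hw : w ∈ unitBall n) :
    ‖z ⬝ᵥ w‖ < 1 :=
  (norm_dotProduct_le z w).trans_lt <|
    mul_lt_one_of_nonneg_of_lt_one_left (Real.sqrt_nonneg _) (sqrt_sum_sq_lt_one hz)
      (sqrt_sum_sq_lt_one hw).le

theorem one_sub_dotProduct_ne_zero {z w : Fin n → ℂ} (hz : z ∈ unitBall n)
    (hw : w ∈ unitBall n) : 1 - z ⬝ᵥ w ≠ 0 := by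
  intro h
  have := norm_dotProduct_lt_one hz hw
  rw [← sub_eq_zero.1 h, norm_one] at this
  exact this.false

theorem deltaBarBall_pos {z w : Fin n → ℂ} (hz : z ∈ unitBall n) (hw : w ∈ unitBall n) :
    0 < deltaBarBall n z w :=
  div_pos (mul_pos (sub_pos.2 hz) (sub_pos.2 hw))
    (pow_pos (norm_pos_iff.2 (one_sub_dotProduct_ne_zero hz hw)) 2)

theorem deltaBarBall_le_one {z w : Fin n → ℂ} (hz : z ∈ unitBall n) (hw : w ∈ unitBall n) :
    deltaBarBall n z w ≤ 1 := by
  set a := √(∑ j, ‖z j‖ ^ 2)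
  set b := √(∑ j, ‖w j‖ ^ 2)
  have ha : a ^ 2 = ∑ j, ‖z j‖ ^ 2 := Real.sq_sqrt (sum_nonneg fun j _ => sq_nonneg _)
  have hb : b ^ 2 = ∑ j, ‖w j‖ ^ 2 := Real.sq_sqrt (sum_nonneg fun j _ => sq_nonneg _)
  have hab : 0 ≤ 1 - a * b := sub_nonneg.2 <| mul_le_one₀ (sqrt_sum_sq_lt_one hz).le
    (Real.sqrt_nonneg _) (sqrt_sum_sq_lt_one hw).le
  have hnorm : 1 - a * b ≤ ‖1 - z ⬝ᵥ w‖ := calc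
    1 - a * b ≤ 1 - ‖z ⬝ᵥ w‖ := by linarith [norm_dotProduct_le z w]
    _ ≤ ‖1 - z ⬝ᵥ w‖ := by simpa using norm_sub_norm_le (1 : ℂ) (z ⬝ᵥ w)
  have hden : 0 < ‖1 - z ⬝ᵥ w‖ ^ 2 :=
    pow_pos (norm_pos_iff.2 (one_sub_dotProduct_ne_zero hz hw)) 2
  change _ / ‖1 - z ⬝ᵥ w‖ ^ 2 ≤ 1
  rw [div_le_one hden, ← ha, ← hb]
  calc (1 - a ^ 2) * (1 - b ^ 2) ≤ (1 - a * b) ^ 2 := by nlinarith [sq_nonneg (a - b)]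
    _ ≤ ‖1 - z ⬝ᵥ w‖ ^ 2 := pow_le_pow_left₀ hab hnorm 2

theorem normSq_div_sub_div_lt {z w ζ : Fin n → ℂ} (hz : z ∈ unitBall n) (hw : w ∈ unitBall n)
    (hζ : ζ ≠ 0) :
    normSq (ζ ⬝ᵥ star z / (1 - ∑ j, ‖z j‖ ^ 2 : ℝ) - ζ ⬝ᵥ w / (1 - z ⬝ᵥ w)) <
      (∑ j, ‖ζ j‖ ^ 2) / (1 - ∑ j, ‖z j‖ ^ 2)
        + normSq (ζ ⬝ᵥ star z) / (1 - ∑ j, ‖z j‖ ^ 2) ^ 2 := by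
  have hA : 0 < 1 - ∑ j, ‖z j‖ ^ 2 := sub_pos.2 hz
  have hA' : 0 < 1 - ∑ j, ‖w j‖ ^ 2 := sub_pos.2 hw
  set μ := ζ ⬝ᵥ w / (1 - z ⬝ᵥ w)
  set η := ζ + μ • z
  have hηw : η ⬝ᵥ w = μ := by
    have hp := one_sub_dotProduct_ne_zero hz hw
    simp only [η, μ, add_dotProduct, smul_dotProduct, smul_eq_mul]
    field_simp
    ring
  have hη : η ≠ 0 := by
    intro h
    have hμ : μ = 0 := by rw [← hηw, h, zero_dotProduct]
    exact hζ (by simpa [η, hμ] using h)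
  have hCS : normSq μ ≤ (∑ j, ‖η j‖ ^ 2) * ∑ j, ‖w j‖ ^ 2 := hηw ▸ normSq_dotProduct_le η w
  have hconj : z ⬝ᵥ star ζ = conj (ζ ⬝ᵥ star z) := Matrix.dotProduct_star z ζ
  have hexp := sum_norm_add_smul_sq ζ z μ
  rw [hconj] at hexp
  have key : (∑ j, ‖ζ j‖ ^ 2) / (1 - ∑ j, ‖z j‖ ^ 2)
        + normSq (ζ ⬝ᵥ star z) / (1 - ∑ j, ‖z j‖ ^ 2) ^ 2
      - normSq (ζ ⬝ᵥ star z / (1 - ∑ j, ‖z j‖ ^ 2 : ℝ) - μ)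
      = ((∑ j, ‖η j‖ ^ 2) - normSq μ) / (1 - ∑ j, ‖z j‖ ^ 2) := by
    rw [hexp]
    simp only [normSq_apply, sub_re, sub_im, div_ofReal_re, div_ofReal_im, mul_re,
      conj_re, conj_im]
    field_simp
    ring
  have hpos : 0 < ((∑ j, ‖η j‖ ^ 2) - normSq μ) / (1 - ∑ j, ‖z j‖ ^ 2) :=
    div_pos (by nlinarith [sum_norm_sq_pos hη]) hA
  linarith

theorem normSq_div_sub_div_le {z w : Fin n → ℂ} (hz : z ∈ unitBall n) (hw : w ∈ unitBall n)
    (ζ : Fin n → ℂ) :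
    normSq (ζ ⬝ᵥ star z / (1 - ∑ j, ‖z j‖ ^ 2 : ℝ) - ζ ⬝ᵥ w / (1 - z ⬝ᵥ w)) ≤
      (∑ j, ‖ζ j‖ ^ 2) / (1 - ∑ j, ‖z j‖ ^ 2)
        + normSq (ζ ⬝ᵥ star z) / (1 - ∑ j, ‖z j‖ ^ 2) ^ 2 := by
  rcases eq_or_ne ζ 0 with rfl | hζ
  · simp
  · exact (normSq_div_sub_div_lt hz hw hζ).le

theorem normSq_add_div_sub_div_lt {z w ζ ω : Fin n → ℂ} (hz : z ∈ unitBall n)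
    (hw : w ∈ unitBall n) (hv : (ζ, ω) ≠ 0) :
    normSq (ζ ⬝ᵥ star z / (1 - ∑ j, ‖z j‖ ^ 2 : ℝ) + ω ⬝ᵥ star w / (1 - ∑ j, ‖w j‖ ^ 2 : ℝ)
        - (ζ ⬝ᵥ w + z ⬝ᵥ ω) / (1 - z ⬝ᵥ w)) <
      2 * ((∑ j, ‖ζ j‖ ^ 2) / (1 - ∑ j, ‖z j‖ ^ 2)
        + normSq (ζ ⬝ᵥ star z) / (1 - ∑ j, ‖z j‖ ^ 2) ^ 2
        + ((∑ j, ‖ω j‖ ^ 2) / (1 - ∑ j, ‖w j‖ ^ 2)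
        + normSq (ω ⬝ᵥ star w) / (1 - ∑ j, ‖w j‖ ^ 2) ^ 2)) := by
  set X := ζ ⬝ᵥ star z / (1 - ∑ j, ‖z j‖ ^ 2 : ℝ) - ζ ⬝ᵥ w / (1 - z ⬝ᵥ w)
  set Y := ω ⬝ᵥ star w / (1 - ∑ j, ‖w j‖ ^ 2 : ℝ) - z ⬝ᵥ ω / (1 - z ⬝ᵥ w)
  have hXY : normSq (X + Y) ≤ 2 * (normSq X + normSq Y) := by
    simp only [← Complex.sq_norm]
    exact (pow_le_pow_left₀ (norm_nonneg _) (norm_add_le X Y) 2).trans add_sq_le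
  have hY : normSq Y = normSq (ω ⬝ᵥ star w / (1 - ∑ j, ‖w j‖ ^ 2 : ℝ)
      - ω ⬝ᵥ z / (1 - w ⬝ᵥ z)) := by
    rw [dotProduct_comm ω z, dotProduct_comm w z]
  have hsum : normSq X + normSq Y < (∑ j, ‖ζ j‖ ^ 2) / (1 - ∑ j, ‖z j‖ ^ 2)
        + normSq (ζ ⬝ᵥ star z) / (1 - ∑ j, ‖z j‖ ^ 2) ^ 2
        + ((∑ j, ‖ω j‖ ^ 2) / (1 - ∑ j, ‖w j‖ ^ 2)
        + normSq (ω ⬝ᵥ star w) / (1 - ∑ j, ‖w j‖ ^ 2) ^ 2) := by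
    rw [hY]
    rcases eq_or_ne ζ 0 with rfl | hζ
    · have hω : ω ≠ 0 := fun h => hv (by rw [h]; rfl)
      exact add_lt_add_of_le_of_lt (normSq_div_sub_div_le hz hw 0) (normSq_div_sub_div_lt hw hz hω)
    · exact add_lt_add_of_lt_of_le (normSq_div_sub_div_lt hz hw hζ) (normSq_div_sub_div_le hw hz ω)
  calc _ = normSq (X + Y) := by congr 1; simp only [X, Y]; ring
    _ < _ := by linarith

theorem deltaBarBall_add_smul (z w ζ ω : Fin n → ℂ) (s : ℝ) :
    deltaBarBall n (z + (s : ℂ) • ζ) (w + (s : ℂ) • ω) =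
      ((1 - ∑ j, ‖z j‖ ^ 2) - 2 * (ζ ⬝ᵥ star z).re * s - (∑ j, ‖ζ j‖ ^ 2) * s ^ 2) *
        ((1 - ∑ j, ‖w j‖ ^ 2) - 2 * (ω ⬝ᵥ star w).re * s - (∑ j, ‖ω j‖ ^ 2) * s ^ 2) /
      normSq ((1 - z ⬝ᵥ w) + -(ζ ⬝ᵥ w + z ⬝ᵥ ω) * s + -(ζ ⬝ᵥ ω) * s ^ 2) := by
  change _ / ‖1 - (z + (s : ℂ) • ζ) ⬝ᵥ (w + (s : ℂ) • ω)‖ ^ 2 = _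
  rw [sum_norm_add_smul_sq, sum_norm_add_smul_sq, Complex.sq_norm, normSq_ofReal, re_ofReal_mul,
    re_ofReal_mul]
  congr 1
  · ring
  · simp only [add_dotProduct, dotProduct_add, smul_dotProduct, dotProduct_smul, smul_eq_mul]
    ring_nf

theorem laplacianAt_neg_sqrt_deltaBarBall_pos {z w ζ ω : Fin n → ℂ} (hz : z ∈ unitBall n)
    (hw : w ∈ unitBall n) (hv : (ζ, ω) ≠ 0) :
    0 < laplacianAt fun t : ℂ => -(deltaBarBall n (z + t • ζ) (w + t • ω) ^ (1 / 2 : ℝ)) := by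
  have hp := one_sub_dotProduct_ne_zero hz hw
  simp only [laplacianAt, mul_smul, deltaBarBall_add_smul,
    iteratedDeriv_two_neg_sqrt_quadratic_mul_div_normSq (sub_pos.2 hz) (sub_pos.2 hw) hp]
  rw [← mul_add]
  refine mul_pos (Real.sqrt_pos.2 <|
    div_pos (mul_pos (sub_pos.2 hz) (sub_pos.2 hw)) (normSq_pos.2 hp)) ?_
  have key := normSq_add_div_sub_div_lt hz hw hv
  simp only [smul_dotProduct, dotProduct_smul, Pi.smul_apply, smul_eq_mul, norm_mul, norm_I,
    one_mul, div_eq_mul_inv _ (1 - z ⬝ᵥ w)] at key ⊢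
  -- Once `(1 - z ⬝ᵥ w)⁻¹` is named, the sum of the two axes is `2 (…) - |X + Y|²` by a
  -- polynomial identity.
  generalize (1 - z ⬝ᵥ w)⁻¹ = π at key ⊢
  generalize 1 - ∑ j, ‖z j‖ ^ 2 = A at key ⊢
  generalize 1 - ∑ j, ‖w j‖ ^ 2 = A' at key ⊢
  simp only [normSq_apply, add_re, add_im, sub_re, sub_im, mul_re, mul_im, neg_re, neg_im,
    div_ofReal_re, div_ofReal_im, I_re, I_im, pow_two, re_ofNat, im_ofNat] at key ⊢
  linear_combination key

theorem neg_deltaBar_sqrt_strictpsh_ball_general (n : ℕ) :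
    (∀ z ∈ unitBall n, ∀ w ∈ unitBall n, (1 : ℂ) - ∑ j, z j * w j ≠ 0) ∧
    StrictPSHOn (fun zw : (Fin n → ℂ) × (Fin n → ℂ) =>
        -(deltaBarBall n zw.1 zw.2 ^ ((1 : ℝ) / 2)))
      ((unitBall n) ×ˢ (unitBall n)) ∧
    (∀ z ∈ unitBall n, ∀ w ∈ unitBall n,
      -(deltaBarBall n z w ^ ((1 : ℝ) / 2)) ∈ Set.Ico (-1 : ℝ) 0) := by
  refine ⟨fun z hz w hw => one_sub_dotProduct_ne_zero hz hw, ?_, fun z hz w hw => ?_⟩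
  · rintro ⟨z, w⟩ ⟨hz, hw⟩ ⟨ζ, ω⟩ hv
    exact laplacianAt_neg_sqrt_deltaBarBall_pos hz hw hv
  · have hpos := Real.rpow_pos_of_pos (deltaBarBall_pos hz hw) (1 / 2)
    have hle := Real.rpow_le_one (deltaBarBall_pos hz hw).le (deltaBarBall_le_one hz hw)
      (by norm_num : (0 : ℝ) ≤ 1 / 2)
    exact ⟨by linarith, by linarith⟩

/-- For `z, w ∈ 𝔹^n` one has `1 − Σ_j z_j w_j ≠ 0`, and `−δ̄^{1/2}` is strictly
plurisubharmonic on `𝔹^n × 𝔹^n` with values in `[−1, 0)`. -/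
theorem neg_deltaBar_sqrt_strictpsh_ball (n : ℕ) (hn : 1 ≤ n) :
    (∀ z ∈ unitBall n, ∀ w ∈ unitBall n, (1 : ℂ) - ∑ j, z j * w j ≠ 0) ∧
    StrictPSHOn (fun zw : (Fin n → ℂ) × (Fin n → ℂ) =>
        -(deltaBarBall n zw.1 zw.2 ^ ((1 : ℝ) / 2)))
      ((unitBall n) ×ˢ (unitBall n)) ∧
    (∀ z ∈ unitBall n, ∀ w ∈ unitBall n,
      -(deltaBarBall n z w ^ ((1 : ℝ) / 2)) ∈ Set.Ico (-1 : ℝ) 0) :=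
  neg_deltaBar_sqrt_strictpsh_ball_general n
end
end
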